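/- arXiv:math/9609204 — 2 statements merged into one kernel-verified Lean document; each statement's English description precedes it below -/
import Mathlib

section
/- For all N, h, M ∈ ℕ and all b, ℓ ∈ ℚ, the set D^M_{b,ℓ} is a closed subset of C(ℝ²) × ℝ². -/
open Set Filter Topology
open scoped Classical
open scoped NNReal

noncomputable section

/-- The interval `[x, b)` as a subset of `ℝ`, where `b : EReal` may be `+∞`. -/
def Dom (x : ℝ) (b : EReal) : Set ℝ := {t : ℝ | x ≤ t ∧ (t : EReal) < b}

/-- `φ` solves `φ' = F(t, φ(t))`, `φ(x) = y` on `[x, b)` (at `x` the right derivative;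
since `F` is continuous this automatically makes `φ` continuously differentiable). -/
def PSol (F : C(ℝ × ℝ, ℝ)) (x y : ℝ) (b : EReal) (φ : ℝ → ℝ) : Prop :=
  (x : EReal) < b ∧ φ x = y ∧
    ∀ t ∈ Dom x b, HasDerivWithinAt φ (F (t, φ t)) (Dom x b) t

/-- `φ ∈ S⁺_{F,(x,y)}` with domain `[x, b)`: a solution which is non-extendible to the
right, i.e. admits no extension to a solution on a strictly larger interval `[x, b')`. -/
def SolPlus (F : C(ℝ × ℝ, ℝ)) (x y : ℝ) (b : EReal) (φ : ℝ → ℝ) : Prop :=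
  PSol F x y b φ ∧
    ∀ (b' : EReal) (ψ : ℝ → ℝ), b < b' → (∀ t ∈ Dom x b, ψ t = φ t) →
      ¬ PSol F x y b' ψ

/-- The filter `t → b⁻` on `ℝ` (equal to `atTop` when `b = ⊤`). -/
def leftLim (b : EReal) : Filter ℝ :=
  Filter.comap (fun t : ℝ => (t : EReal)) (nhdsWithin b (Iio b))

/-- `lim₊ φ = +∞` for `φ` with domain `[x, b)`. -/
def LimPlusTop (φ : ℝ → ℝ) (b : EReal) : Prop := Tendsto φ (leftLim b) atTop

/-- `lim₊ φ = -∞` for `φ` with domain `[x, b)`. -/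
def LimPlusBot (φ : ℝ → ℝ) (b : EReal) : Prop := Tendsto φ (leftLim b) atBot

/-- `‖φ ↾ [x, c]‖_∞ ≤ h`. -/
def SupNormLe (φ : ℝ → ℝ) (x c h : ℝ) : Prop := ∀ t ∈ Icc x c, |φ t| ≤ h

/-- `D^M_{b,ℓ}` (for fixed `N, h`): the set of `(F, x, y)` for which there are `r ∈ ℝ`
and `φ ∈ S⁺_{F,(x,y)}` with `x+N ≤ r ≤ x+N+ℓ`, `‖φ ↾ [x, x+N]‖_∞ ≤ h`, `r ∈ dom(φ)`,
`φ(t) ≥ b` for all `t ∈ [x, r]`, and `φ(r) ≥ M`. -/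
def Dset (N h M : ℕ) (b l : ℚ) : Set (C(ℝ × ℝ, ℝ) × ℝ × ℝ) :=
  {p | ∃ (r : ℝ) (c : EReal) (φ : ℝ → ℝ), SolPlus p.1 p.2.1 p.2.2 c φ ∧
    p.2.1 + N ≤ r ∧ r ≤ p.2.1 + N + l ∧ SupNormLe φ p.2.1 (p.2.1 + N) h ∧
    (r : EReal) < c ∧ (∀ t ∈ Icc p.2.1 r, (b : ℝ) ≤ φ t) ∧ (M : ℝ) ≤ φ r}

lemma clamp_mem {a b t : ℝ} (hab : a ≤ b) : max a (min t b) ∈ Icc a b :=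
  ⟨le_max_left _ _, max_le hab (min_le_right _ _)⟩

lemma clamp_eq {a b t : ℝ} (ht : t ∈ Icc a b) : max a (min t b) = t := by
  rw [min_eq_left ht.2, max_eq_right ht.1]

lemma clamp_lip (a b t t' : ℝ) : |max a (min t b) - max a (min t' b)| ≤ |t - t'| := by
  calc |max a (min t b) - max a (min t' b)| ≤ max |a - a| |min t b - min t' b| :=
        abs_max_sub_max_le_max _ _ _ _
    _ ≤ max |a - a| (max |t - t'| |b - b|) := by
        exact max_le_max le_rfl (abs_min_sub_min_le_max _ _ _ _)
    _ ≤ |t - t'| := by simp [abs_nonneg]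

/-- FTC: from derivative on `Icc` to integral equation. -/
lemma integral_form {f g : ℝ → ℝ} {a b : ℝ} (hg : Continuous g)
    (hf : ∀ t ∈ Icc a b, HasDerivWithinAt f (g t) (Icc a b) t) :
    ∀ t ∈ Icc a b, f t = f a + ∫ s in a..t, g s := by
  have hGd : ∀ u : ℝ, HasDerivAt (fun w => f a + ∫ s in a..w, g s) (g u) u := by
    intro u
    exact (intervalIntegral.integral_hasDerivAt_right (hg.intervalIntegrable _ _)
      (hg.stronglyMeasurableAtFilter _ _) hg.continuousAt).const_add (f a)
  refine eq_of_has_deriv_right_eq (f' := g) (fun u hu => ?_) (fun u hu => ?_)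
    (fun u hu => (hf u hu).continuousWithinAt) (fun u hu => (hGd u).continuousAt.continuousWithinAt)
    (by simp)
  · refine (hf u ⟨hu.1, hu.2.le⟩).mono_of_mem_nhdsWithin ?_
    refine mem_of_superset (inter_mem_nhdsWithin _ (Iio_mem_nhds hu.2)) ?_
    rintro w ⟨hw1, hw2⟩
    exact ⟨le_trans hu.1 hw1, hw2.le⟩
  · exact (hGd u).hasDerivWithinAt

/-- FTC: from integral equation to derivative within any set. -/
lemma deriv_of_integral_form {φ g : ℝ → ℝ} {x y : ℝ} {s : Set ℝ} (hg : Continuous g)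
    (hs : ∀ t ∈ s, φ t = y + ∫ u in x..t, g u) :
    ∀ t ∈ s, HasDerivWithinAt φ (g t) s t := by
  intro t ht
  have hGd : HasDerivAt (fun w => y + ∫ u in x..w, g u) (g t) t :=
    (intervalIntegral.integral_hasDerivAt_right (hg.intervalIntegrable _ _)
      (hg.stronglyMeasurableAtFilter _ _) hg.continuousAt).const_add y
  exact (hGd.hasDerivWithinAt).congr hs (hs t ht)

lemma core {ι : Type*} (U : Ultrafilter ι) {G : ι → C(ℝ × ℝ, ℝ)} {F : C(ℝ × ℝ, ℝ)}
    {xs ys rs : ι → ℝ} {x y r B : ℝ} {ψ : ι → ℝ → ℝ}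
    (hx : Tendsto xs U (𝓝 x)) (hy : Tendsto ys U (𝓝 y)) (hr : Tendsto rs U (𝓝 r))
    (hxr : x ≤ r) (hB0 : 0 ≤ B)
    (hG : Tendsto G U (𝓝 F))
    (hle : ∀ᶠ q in U, xs q ≤ rs q)
    (heq : ∀ᶠ q in U, ∀ t ∈ Icc (xs q) (rs q), ψ q t = ys q + ∫ s in (xs q)..t, (G q) (s, ψ q s))
    (hB : ∀ᶠ q in U, ∀ t, |ψ q t| ≤ B)
    (hclamp : ∀ᶠ q in U, ∀ t, ψ q t = ψ q (max (xs q) (min t (rs q))))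
    (hcont : ∀ᶠ q in U, Continuous (ψ q)) :
    ∃ φ : ℝ → ℝ, Continuous φ ∧ (∀ t, |φ t| ≤ B) ∧
      (∀ t ∈ Icc x r, φ t = y + ∫ s in x..t, F (s, φ s)) ∧
      (∀ (ts : ι → ℝ) (t : ℝ), Tendsto ts U (𝓝 t) →
        Tendsto (fun q => ψ q (ts q)) U (𝓝 (φ t))) := by
  set Q : Set (ℝ × ℝ) := Icc (x-1) (r+1) ×ˢ Icc (-B-1) (B+1) with hQdef
  have hQc : IsCompact Q := isCompact_Icc.prod isCompact_Icc
  obtain ⟨C, hC⟩ := hQc.exists_bound_of_continuousOn F.continuous.continuousOn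
  have hC0 : 0 ≤ C := le_trans (norm_nonneg _)
    (hC (x-1, 0) ⟨⟨le_refl _, show x - 1 ≤ r + 1 by linarith⟩,
      show -B-1 ≤ (0:ℝ) by linarith, show (0:ℝ) ≤ B+1 by linarith⟩)
  set L : ℝ := C + 1 with hLdef
  have hL0 : 0 ≤ L := by linarith
  have hGF : TendstoUniformlyOn (fun q p => G q p) F U Q :=
    (ContinuousMap.tendsto_iff_forall_isCompact_tendstoUniformlyOn.1 hG) Q hQc
  have hxs1 : ∀ᶠ q in U, x - 1 ≤ xs q := hx.eventually (eventually_ge_nhds (by linarith))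
  have hrs1 : ∀ᶠ q in U, rs q ≤ r + 1 := hr.eventually (eventually_le_nhds (by linarith))
  have hQmem : ∀ᶠ q in U, ∀ s ∈ Icc (xs q) (rs q), (s, ψ q s) ∈ Q := by
    filter_upwards [hxs1, hrs1, hB] with q h1 h2 h3
    intro s hs
    have h4 := abs_le.1 (h3 s)
    exact ⟨⟨le_trans h1 hs.1, le_trans hs.2 h2⟩, ⟨by linarith [h4.1], by linarith [h4.2]⟩⟩
  have hg1 : ∀ᶠ q in U, ∀ p ∈ Q, dist (F p) (G q p) < 1 :=
    Metric.tendstoUniformlyOn_iff.1 hGF 1 one_pos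
  have hgb : ∀ᶠ q in U, ∀ s ∈ Icc (xs q) (rs q), |(G q) (s, ψ q s)| ≤ L := by
    filter_upwards [hQmem, hg1] with q h1 h2
    intro s hs
    have hp := h1 s hs
    have h3 : |F (s, ψ q s)| ≤ C := by
      have := hC _ hp; rwa [Real.norm_eq_abs] at this
    have h4 : |F (s, ψ q s) - G q (s, ψ q s)| < 1 := by
      have := h2 _ hp; rwa [Real.dist_eq] at this
    have h5 : |G q (s, ψ q s)| - |F (s, ψ q s)| ≤ |G q (s, ψ q s) - F (s, ψ q s)| :=
      abs_sub_abs_le_abs_sub _ _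
    rw [abs_sub_comm] at h5
    simp only [hLdef]
    linarith
  -- equi-Lipschitz
  have hlip : ∀ᶠ q in U, ∀ t t', |ψ q t - ψ q t'| ≤ L * |t - t'| := by
    filter_upwards [heq, hgb, hclamp, hle, hcont] with q hq hb hcl hl hc
    have hGqc : Continuous fun s => G q (s, ψ q s) :=
      (G q).continuous.comp (continuous_id.prodMk hc)
    have key : ∀ t ∈ Icc (xs q) (rs q), ∀ t' ∈ Icc (xs q) (rs q),
        |ψ q t - ψ q t'| ≤ L * |t - t'| := by
      intro t ht t' ht'
      have e : ψ q t - ψ q t' = ∫ s in t'..t, G q (s, ψ q s) := by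
        rw [hq t ht, hq t' ht', add_sub_add_left_eq_sub]
        exact intervalIntegral.integral_interval_sub_left
          (hGqc.intervalIntegrable _ _) (hGqc.intervalIntegrable _ _)
      have hbd : ∀ s ∈ Set.uIoc t' t, ‖G q (s, ψ q s)‖ ≤ L := by
        intro s hs
        rcases hs with ⟨hs1, hs2⟩
        have hsmem : s ∈ Icc (xs q) (rs q) :=
          ⟨le_of_lt (lt_of_le_of_lt (le_min ht'.1 ht.1) hs1),
           le_trans hs2 (max_le ht'.2 ht.2)⟩
        rw [Real.norm_eq_abs]; exact hb s hsmem
      have hfin := intervalIntegral.norm_integral_le_of_norm_le_const hbd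
      rw [← e, Real.norm_eq_abs] at hfin
      exact hfin
    intro t t'
    rw [hcl t, hcl t']
    exact le_trans (key _ (clamp_mem hl) _ (clamp_mem hl))
      (mul_le_mul_of_nonneg_left (clamp_lip _ _ _ _) hL0)
  -- pointwise ultrafilter limits
  have hex : ∀ t : ℝ, ∃ a ∈ Icc (-B) B, Tendsto (fun q => ψ q t) U (𝓝 a) := by
    intro t
    have hmem : Icc (-B) B ∈ U.map (fun q => ψ q t) := by
      rw [Ultrafilter.mem_map]
      filter_upwards [hB] with q hq
      exact ⟨neg_le_of_abs_le (hq t), le_of_abs_le (hq t)⟩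
    obtain ⟨a, ha, hconv⟩ := isCompact_iff_ultrafilter_le_nhds.1 isCompact_Icc
      (U.map _) (le_principal_iff.2 hmem)
    exact ⟨a, ha, by rwa [Ultrafilter.coe_map] at hconv⟩
  choose φ hφmem hφt using hex
  have hlip' : ∀ t t', |φ t - φ t'| ≤ L * |t - t'| := fun t t' =>
    le_of_tendsto (((hφt t).sub (hφt t')).abs) (hlip.mono fun q hq => hq t t')
  have hφc : Continuous φ := by
    have : LipschitzWith (Real.toNNReal L) φ := by
      apply LipschitzWith.of_dist_le_mul
      intro t t'
      rw [Real.dist_eq, Real.dist_eq, Real.coe_toNNReal L hL0]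
      exact hlip' t t'
    exact this.continuous
  have hφB : ∀ t, |φ t| ≤ B := fun t =>
    le_of_tendsto (hφt t).abs (hB.mono fun q hq => hq t)
  -- moving limits
  have hmv : ∀ (ts : ι → ℝ) (t : ℝ), Tendsto ts U (𝓝 t) →
      Tendsto (fun q => ψ q (ts q)) U (𝓝 (φ t)) := by
    intro ts t hts
    rw [tendsto_iff_dist_tendsto_zero]
    refine squeeze_zero' (g := fun q => L * |ts q - t| + dist (ψ q t) (φ t))
      (Eventually.of_forall fun q => dist_nonneg) ?_ ?_
    · filter_upwards [hlip] with q hq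
      calc dist (ψ q (ts q)) (φ t) ≤ dist (ψ q (ts q)) (ψ q t) + dist (ψ q t) (φ t) :=
            dist_triangle _ _ _
        _ ≤ L * |ts q - t| + dist (ψ q t) (φ t) := by
            rw [Real.dist_eq]; exact add_le_add_left (hq _ _) _
    · have h1 : Tendsto (fun q => L * |ts q - t|) U (𝓝 0) := by
        have h0 : Tendsto (fun q => ts q - t) U (𝓝 0) := by
          simpa using hts.sub_const t
        simpa using h0.abs.const_mul L
      have h2 : Tendsto (fun q => dist (ψ q t) (φ t)) U (𝓝 0) :=
        tendsto_iff_dist_tendsto_zero.1 (hφt t)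
      simpa using h1.add h2
  -- uniform convergence on J
  have hunif : TendstoUniformlyOn (fun q t => ψ q t) φ U (Icc (x-1) (r+1)) := by
    rw [Metric.tendstoUniformlyOn_iff]
    intro ε hε
    set δ : ℝ := ε / (3 * (L+1)) with hδdef
    have hδ : 0 < δ := by positivity
    obtain ⟨T, hT⟩ := isCompact_Icc.elim_finite_subcover (fun t : ℝ => Metric.ball t δ)
      (fun t => Metric.isOpen_ball) (fun t _ => mem_iUnion.2 ⟨t, Metric.mem_ball_self hδ⟩)
    have hev : ∀ᶠ q in U, ∀ i ∈ T, dist (φ i) (ψ q i) < δ := by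
      rw [Filter.eventually_all_finset]
      intro i _
      have := (Metric.tendsto_nhds.1 (hφt i)) δ hδ
      filter_upwards [this] with q hq
      rwa [dist_comm]
    filter_upwards [hev, hlip] with q h1 h2
    intro t ht
    obtain ⟨i, hiT, hti⟩ := mem_iUnion₂.1 (hT ht)
    have hti' : |t - i| < δ := by rwa [Metric.mem_ball, Real.dist_eq] at hti
    have d1 : dist (φ t) (φ i) ≤ L * δ := by
      rw [Real.dist_eq]
      exact le_trans (hlip' t i) (mul_le_mul_of_nonneg_left hti'.le hL0)
    have d3 : dist (ψ q i) (ψ q t) ≤ L * δ := by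
      rw [Real.dist_eq]
      refine le_trans (h2 i t) (mul_le_mul_of_nonneg_left ?_ hL0)
      rw [abs_sub_comm]; exact hti'.le
    have := dist_triangle4 (φ t) (φ i) (ψ q i) (ψ q t)
    have hδε : 3 * (L+1) * δ = ε := by
      rw [hδdef]; field_simp
    have : dist (φ t) (ψ q t) ≤ L * δ + dist (φ i) (ψ q i) + L * δ := by linarith
    have hlt : L * δ + dist (φ i) (ψ q i) + L * δ < L * δ + δ + L * δ := by
      have := h1 i hiT; linarith
    have : dist (φ t) (ψ q t) < L * δ + δ + L * δ := lt_of_le_of_lt this hlt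
    nlinarith [hδ, hL0]
  -- integral equation in the limit
  have hFφc : Continuous fun s => F (s, φ s) := F.continuous.comp (continuous_id.prodMk hφc)
  set P : ℝ → ℝ := fun w => ∫ s in (x-1)..w, F (s, φ s) with hPdef
  have hPc : Continuous P := by
    rw [continuous_iff_continuousAt]
    intro w
    exact (intervalIntegral.integral_hasDerivAt_right (hFφc.intervalIntegrable _ _)
      (hFφc.stronglyMeasurableAtFilter _ _) hFφc.continuousAt).continuousAt
  have hC1 : ∀ t ∈ Icc x r, φ t = y + ∫ s in x..t, F (s, φ s) := by
    intro t ht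
    set ts : ι → ℝ := fun q => max (xs q) (min t (rs q)) with htsdef
    have htst : Tendsto ts U (𝓝 t) := by
      have h0 : Tendsto ts U (𝓝 (max x (min t r))) :=
        hx.max (tendsto_const_nhds.min hr)
      rwa [min_eq_left ht.2, max_eq_right ht.1] at h0
    have hLHS := hmv ts t htst
    have hmemts : ∀ᶠ q in U, ts q ∈ Icc (xs q) (rs q) := hle.mono fun q hq => clamp_mem hq
    have hBint : Tendsto (fun q => P (ts q) - P (xs q)) U (𝓝 (P t - P x)) :=
      ((hPc.tendsto t).comp htst).sub ((hPc.tendsto x).comp hx)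
    have hA : Tendsto (fun q => (∫ s in (xs q)..(ts q), G q (s, ψ q s)) - (P (ts q) - P (xs q)))
        U (𝓝 0) := by
      rw [Metric.tendsto_nhds]
      intro ε hε
      set K0 : ℝ := r - x + 3 with hK0def
      have hK0 : 0 < K0 := by simp only [hK0def]; linarith
      set ε' : ℝ := ε / (2 * K0 + 1) with hε'def
      have hε' : 0 < ε' := by positivity
      obtain ⟨δ', hδ', hucd⟩ := Metric.uniformContinuousOn_iff.1
        (hQc.uniformContinuousOn_of_continuous F.continuous.continuousOn) ε' hε'
      have hev1 : ∀ᶠ q in U, ∀ p ∈ Q, dist (F p) (G q p) < ε' :=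
        Metric.tendstoUniformlyOn_iff.1 hGF ε' hε'
      have hev2 : ∀ᶠ q in U, ∀ s ∈ Icc (x-1) (r+1), dist (φ s) (ψ q s) < δ' :=
        Metric.tendstoUniformlyOn_iff.1 hunif δ' hδ'
      filter_upwards [hev1, hev2, hQmem, hxs1, hrs1, hle, hcont, hmemts]
        with q h1 h2 h3 h4 h5 h6 h7 h8
      have hGqc : Continuous fun s => G q (s, ψ q s) :=
        (G q).continuous.comp (continuous_id.prodMk h7)
      have hPd : P (ts q) - P (xs q) = ∫ s in (xs q)..(ts q), F (s, φ s) :=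
        intervalIntegral.integral_interval_sub_left
          (hFφc.intervalIntegrable _ _) (hFφc.intervalIntegrable _ _)
      rw [Real.dist_eq, sub_zero, hPd,
        ← intervalIntegral.integral_sub (hGqc.intervalIntegrable _ _)
          (hFφc.intervalIntegrable _ _)]
      have hbound : ∀ s ∈ Set.uIoc (xs q) (ts q),
          ‖G q (s, ψ q s) - F (s, φ s)‖ ≤ 2 * ε' := by
        intro s hs
        rw [Set.uIoc_of_le h8.1] at hs
        have hsmem : s ∈ Icc (xs q) (rs q) := ⟨hs.1.le, le_trans hs.2 h8.2⟩
        have hsJ : s ∈ Icc (x-1) (r+1) := ⟨le_trans h4 hsmem.1, le_trans hsmem.2 h5⟩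
        have hp1 : (s, ψ q s) ∈ Q := h3 s hsmem
        have hp2 : (s, φ s) ∈ Q := by
          have h9 := abs_le.1 (hφB s)
          exact ⟨hsJ, ⟨by linarith [h9.1], by linarith [h9.2]⟩⟩
        have e1 : dist (G q (s, ψ q s)) (F (s, ψ q s)) < ε' := by
          rw [dist_comm]; exact h1 _ hp1
        have e2 : dist (F (s, ψ q s)) (F (s, φ s)) < ε' := by
          apply hucd _ hp1 _ hp2
          rw [Prod.dist_eq]
          simp only [dist_self]
          rw [max_eq_right dist_nonneg, dist_comm]
          exact h2 s hsJ
        calc ‖G q (s, ψ q s) - F (s, φ s)‖ = dist (G q (s, ψ q s)) (F (s, φ s)) :=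
              (dist_eq_norm _ _).symm
          _ ≤ dist (G q (s, ψ q s)) (F (s, ψ q s)) + dist (F (s, ψ q s)) (F (s, φ s)) :=
              dist_triangle _ _ _
          _ ≤ 2 * ε' := by linarith
      have hnorm := intervalIntegral.norm_integral_le_of_norm_le_const hbound
      rw [Real.norm_eq_abs] at hnorm
      have habs : |ts q - xs q| ≤ K0 := by
        rw [abs_of_nonneg (by linarith [h8.1])]
        simp only [hK0def]
        linarith [h8.2, h5, h4]
      have hεeq : ε' * (2 * K0 + 1) = ε := by
        rw [hε'def]; field_simp
      calc |∫ s in (xs q)..(ts q), (G q (s, ψ q s) - F (s, φ s))| ≤ 2 * ε' * |ts q - xs q| :=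
            hnorm
        _ ≤ 2 * ε' * K0 := by
            exact mul_le_mul_of_nonneg_left habs (by positivity)
        _ < ε := by nlinarith
    have htend : Tendsto
        (fun q => ys q + ((∫ s in (xs q)..(ts q), G q (s, ψ q s)) - (P (ts q) - P (xs q))
          + (P (ts q) - P (xs q)))) U (𝓝 (y + (0 + (P t - P x)))) :=
      hy.add (hA.add hBint)
    have hsimp : (fun q => ys q + ((∫ s in (xs q)..(ts q), G q (s, ψ q s))
        - (P (ts q) - P (xs q)) + (P (ts q) - P (xs q))))
        = fun q => ys q + ∫ s in (xs q)..(ts q), G q (s, ψ q s) := by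
      funext q; ring
    rw [hsimp] at htend
    have heq' : ∀ᶠ q in U, ys q + (∫ s in (xs q)..(ts q), G q (s, ψ q s)) = ψ q (ts q) := by
      filter_upwards [heq, hmemts] with q hq h8
      exact (hq _ h8).symm
    have htend2 : Tendsto (fun q => ψ q (ts q)) U (𝓝 (y + (0 + (P t - P x)))) :=
      htend.congr' heq'
    have hfin := tendsto_nhds_unique hLHS htend2
    rw [hfin, zero_add]
    congr 1
    exact (intervalIntegral.integral_interval_sub_left
      (hFφc.intervalIntegrable _ _) (hFφc.intervalIntegrable _ _))
  exact ⟨φ, hφc, hφB, hC1, hmv⟩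

lemma mcshane {Ft : ℝ × ℝ → ℝ} {C : ℝ} (hFc : Continuous Ft) (hbd : ∀ p, |Ft p| ≤ C)
    (huc : UniformContinuous Ft) :
    ∃ G : ℕ → C(ℝ × ℝ, ℝ), (∀ n : ℕ, ∀ p q : ℝ × ℝ, |G n p - G n q| ≤ (n : ℝ) * dist p q) ∧
      (∀ n p, |G n p| ≤ C) ∧ TendstoUniformly (fun n p => G n p) Ft atTop := by
  have hC0 : 0 ≤ C := le_trans (abs_nonneg _) (hbd ((0:ℝ),(0:ℝ)))
  set g : ℕ → ℝ × ℝ → ℝ := fun n z => ⨅ w : ℝ × ℝ, (Ft w + n * dist z w) with hgdef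
  have hbdd : ∀ (n : ℕ) (z : ℝ×ℝ), BddBelow (Set.range fun w => Ft w + n * dist z w) := by
    intro n z
    refine ⟨-C, ?_⟩
    rintro v ⟨w, rfl⟩
    have h1 : (0:ℝ) ≤ n * dist z w := by positivity
    have h2 := neg_le_of_abs_le (hbd w)
    simp only []
    linarith
  have hub : ∀ n z, g n z ≤ Ft z := by
    intro n z
    have := ciInf_le (hbdd n z) z
    simpa using this
  have hlb : ∀ n z, -C ≤ g n z := by
    intro n z
    refine le_ciInf fun w => ?_
    have h1 : (0:ℝ) ≤ n * dist z w := by positivity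
    linarith [neg_le_of_abs_le (hbd w)]
  have hlip1 : ∀ (n : ℕ) (z z' : ℝ×ℝ), g n z ≤ g n z' + n * dist z z' := by
    intro n z z'
    rw [← sub_le_iff_le_add]
    refine le_ciInf fun w => ?_
    rw [sub_le_iff_le_add]
    calc g n z ≤ Ft w + n * dist z w := ciInf_le (hbdd n z) w
      _ ≤ Ft w + n * (dist z z' + dist z' w) := by
          have h1 := dist_triangle z z' w
          have h2 : (0:ℝ) ≤ (n:ℝ) := Nat.cast_nonneg n
          nlinarith
      _ = (Ft w + n * dist z' w) + n * dist z z' := by ring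
  have hlip : ∀ (n : ℕ) (z z' : ℝ×ℝ), |g n z - g n z'| ≤ n * dist z z' := by
    intro n z z'
    rw [abs_sub_le_iff]
    constructor
    · linarith [hlip1 n z z']
    · have := hlip1 n z' z; rw [dist_comm z' z] at this; linarith
  have hgc : ∀ n, Continuous (g n) := by
    intro n
    have : LipschitzWith (n : ℝ≥0) (g n) := by
      apply LipschitzWith.of_dist_le_mul
      intro p q
      rw [Real.dist_eq]
      have := hlip n p q
      simpa using this
    exact this.continuous
  refine ⟨fun n => ⟨g n, hgc n⟩, fun n p q => hlip n p q, fun n p => abs_le.2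
    ⟨hlb n p, le_trans (hub n p) (le_of_abs_le (hbd p))⟩, ?_⟩
  rw [Metric.tendstoUniformly_iff]
  intro ε hε
  obtain ⟨δ, hδ, hd⟩ := Metric.uniformContinuous_iff.1 huc (ε/2) (by linarith)
  obtain ⟨n0, hn0⟩ := exists_nat_ge ((2*C+1)/δ)
  refine eventually_atTop.2 ⟨n0, fun n hn z => ?_⟩
  show dist (Ft z) (g n z) < ε
  have key : ∀ w, Ft z - ε/2 ≤ Ft w + n * dist z w := by
    intro w
    by_cases hw : dist z w < δ
    · have h2 : |Ft z - Ft w| < ε/2 := by rw [← Real.dist_eq]; exact hd hw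
      have h3 : (0:ℝ) ≤ n * dist z w := by positivity
      linarith [(abs_lt.1 h2).2]
    · push_neg at hw
      have h4 : ((2*C+1)/δ) ≤ (n:ℝ) := le_trans hn0 (Nat.cast_le.2 hn)
      have h3 : (2*C+1) ≤ (n:ℝ) * dist z w := by
        calc (2*C+1) = ((2*C+1)/δ) * δ := by field_simp
          _ ≤ (n:ℝ) * δ := mul_le_mul_of_nonneg_right h4 hδ.le
          _ ≤ (n:ℝ) * dist z w := mul_le_mul_of_nonneg_left hw (Nat.cast_nonneg n)
      have h5 := neg_le_of_abs_le (hbd w)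
      have h6 := le_of_abs_le (hbd z)
      linarith
  have h5 : Ft z - ε/2 ≤ g n z := le_ciInf key
  have h6 := hub n z
  rw [Real.dist_eq, abs_of_nonneg (by linarith : (0:ℝ) ≤ Ft z - g n z)]
  linarith

lemma peano (F : C(ℝ × ℝ, ℝ)) (t0 y0 : ℝ) :
    ∃ ε : ℝ, 0 < ε ∧ ∃ g : ℝ → ℝ, g t0 = y0 ∧
      ∀ t ∈ Icc t0 (t0 + ε), HasDerivWithinAt g (F (t, g t)) (Icc t0 (t0 + ε)) t := by
  set Q : Set (ℝ×ℝ) := Icc t0 (t0+1) ×ˢ Icc (y0-1) (y0+1) with hQdef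
  have hQc : IsCompact Q := isCompact_Icc.prod isCompact_Icc
  set cl : ℝ×ℝ → ℝ×ℝ :=
    fun p => (max t0 (min p.1 (t0+1)), max (y0-1) (min p.2 (y0+1))) with hcldef
  have hclm : ∀ p, cl p ∈ Q := fun p => ⟨clamp_mem (by linarith), clamp_mem (by linarith)⟩
  have hclid : ∀ p ∈ Q, cl p = p := by
    rintro ⟨a, c⟩ ⟨h1, h2⟩
    simp only [hcldef]
    rw [clamp_eq h1, clamp_eq h2]
  have hcllip : ∀ p q, dist (cl p) (cl q) ≤ dist p q := by
    intro p q
    rw [Prod.dist_eq]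
    apply max_le
    · rw [Real.dist_eq]
      refine le_trans (clamp_lip _ _ _ _) ?_
      rw [← Real.dist_eq, Prod.dist_eq]; exact le_max_left _ _
    · rw [Real.dist_eq]
      refine le_trans (clamp_lip _ _ _ _) ?_
      rw [← Real.dist_eq, Prod.dist_eq]; exact le_max_right _ _
  have hclc : Continuous cl := by
    apply Continuous.prodMk
    · exact continuous_const.max (continuous_fst.min continuous_const)
    · exact continuous_const.max (continuous_snd.min continuous_const)
  set Ft : ℝ×ℝ → ℝ := fun p => F (cl p) with hFtdef
  have hFtc : Continuous Ft := F.continuous.comp hclc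
  obtain ⟨C, hCb⟩ := hQc.exists_bound_of_continuousOn F.continuous.continuousOn
  have hFtbd : ∀ p, |Ft p| ≤ C := by
    intro p
    have := hCb _ (hclm p)
    rwa [Real.norm_eq_abs] at this
  have hC0 : 0 ≤ C := le_trans (abs_nonneg _) (hFtbd ((0:ℝ),(0:ℝ)))
  have hucF : UniformContinuousOn F Q :=
    hQc.uniformContinuousOn_of_continuous F.continuous.continuousOn
  have huc : UniformContinuous Ft := by
    rw [Metric.uniformContinuous_iff]
    intro ε hε
    obtain ⟨δ, hδ, hd⟩ := Metric.uniformContinuousOn_iff.1 hucF ε hε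
    exact ⟨δ, hδ, fun {a b} hab =>
      hd _ (hclm a) _ (hclm b) (lt_of_le_of_lt (hcllip a b) hab)⟩
  obtain ⟨G, hGlip, hGbd, hGunif⟩ := mcshane hFtc hFtbd huc
  have hsol : ∀ n : ℕ, ∃ f : ℝ → ℝ, f t0 = y0 ∧
      ∀ t ∈ Icc t0 (t0+1), HasDerivWithinAt f ((G n) (t, f t)) (Icc t0 (t0+1)) t := by
    intro n
    have hpl : IsPicardLindelof (fun t y => G n (t, y)) (tmin := t0) (tmax := t0+1)
        ⟨t0, le_refl _, by linarith⟩ y0 (C.toNNReal + 1) 0 C.toNNReal (n : ℝ≥0) := by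
      refine ⟨?_, ?_, ?_, ?_⟩
      · intro t _
        apply LipschitzWith.lipschitzOnWith
        apply LipschitzWith.of_dist_le_mul
        intro a c
        rw [Real.dist_eq]
        have h1 := hGlip n (t, a) (t, c)
        have h2 : dist ((t, a) : ℝ×ℝ) ((t, c) : ℝ×ℝ) = dist a c := by
          rw [Prod.dist_eq, dist_self]; exact max_eq_right dist_nonneg
        rw [h2] at h1
        simpa using h1
      · intro z _
        exact ((G n).continuous.comp (continuous_id.prodMk continuous_const)).continuousOn
      · intro t _ z _
        rw [Real.norm_eq_abs]; exact le_trans (hGbd n (t, z)) (Real.le_coe_toNNReal C)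
      · have e1 : t0 + 1 - t0 = 1 := by ring
        have e2 : t0 - t0 = 0 := by ring
        simp only [e1, e2, max_eq_left (by norm_num : (0:ℝ) ≤ 1), mul_one, NNReal.coe_add,
          NNReal.coe_one, NNReal.coe_zero, sub_zero]
        linarith
    exact hpl.exists_eq_forall_mem_Icc_hasDerivWithinAt₀
  choose f hf0 hfd using hsol
  set ε : ℝ := min 1 (1/(C+1)) with hεdef
  have hε : 0 < ε := lt_min one_pos (by positivity)
  have hε1 : ε ≤ 1 := min_le_left _ _
  have hε2 : ε ≤ 1/(C+1) := min_le_right _ _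
  have hsub : Icc t0 (t0+ε) ⊆ Icc t0 (t0+1) := Icc_subset_Icc le_rfl (by linarith)
  set ψ : ℕ → ℝ → ℝ := fun n t => f n (max t0 (min t (t0+ε))) with hψdef
  have hfcont : ∀ n, ContinuousOn (f n) (Icc t0 (t0+1)) :=
    fun n t ht => (hfd n t ht).continuousWithinAt
  have hψcont : ∀ n, Continuous (ψ n) := by
    intro n
    exact (hfcont n).comp_continuous
      (continuous_const.max (continuous_id.min continuous_const))
      (fun t => hsub (clamp_mem (by linarith)))
  have hψeqf : ∀ n, ∀ t ∈ Icc t0 (t0+ε), ψ n t = f n t := by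
    intro n t ht
    simp only [hψdef]
    rw [clamp_eq ht]
  have hfeq : ∀ n, ∀ t ∈ Icc t0 (t0+ε), ψ n t = y0 + ∫ s in t0..t, (G n) (s, ψ n s) := by
    intro n
    have hgnc : Continuous fun s => (G n) (s, ψ n s) :=
      (G n).continuous.comp (continuous_id.prodMk (hψcont n))
    have hder : ∀ t ∈ Icc t0 (t0+ε),
        HasDerivWithinAt (f n) ((G n) (t, ψ n t)) (Icc t0 (t0+ε)) t := by
      intro t ht
      have h1 := (hfd n t (hsub ht)).mono hsub
      rw [hψeqf n t ht]
      exact h1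
    have h2 := integral_form hgnc hder
    intro t ht
    rw [hψeqf n t ht, h2 t ht, hf0 n]
  have hψy0 : ∀ n t, |ψ n t - y0| ≤ C * ε := by
    intro n t
    set u := max t0 (min t (t0+ε)) with hu
    have hum : u ∈ Icc t0 (t0+ε) := clamp_mem (by linarith)
    have h1 : ψ n t = ψ n u := by
      simp only [hψdef]
      rw [clamp_eq hum]
    rw [h1, hfeq n u hum, add_sub_cancel_left]
    have h3 := intervalIntegral.norm_integral_le_of_norm_le_const (C := C)
      (f := fun s => (G n) (s, ψ n s)) (a := t0) (b := u)
      (fun s _ => by rw [Real.norm_eq_abs]; exact hGbd n _)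
    rw [Real.norm_eq_abs] at h3
    refine le_trans h3 ?_
    rw [abs_of_nonneg (by linarith [hum.1])]
    exact mul_le_mul_of_nonneg_left (by linarith [hum.2]) hC0
  have hψbd : ∀ n t, |ψ n t| ≤ |y0| + C := by
    intro n t
    have h1 := hψy0 n t
    have h2 : C * ε ≤ C := by nlinarith
    have h3 := abs_sub_abs_le_abs_sub (ψ n t) y0
    linarith
  set UU := Ultrafilter.of (atTop : Filter ℕ) with hUU
  have hUle : (UU : Filter ℕ) ≤ atTop := Ultrafilter.of_le _
  set Ftc : C(ℝ×ℝ, ℝ) := ⟨Ft, hFtc⟩ with hFtcdef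
  have hGt : Tendsto G (UU : Filter ℕ) (𝓝 Ftc) := by
    refine Tendsto.mono_left ?_ hUle
    rw [ContinuousMap.tendsto_iff_forall_isCompact_tendstoUniformlyOn]
    intro K _
    exact hGunif.tendstoUniformlyOn
  obtain ⟨φ, hφc, hφB, hφeq, -⟩ := core UU (G := G) (F := Ftc)
    (xs := fun _ => t0) (ys := fun _ => y0) (rs := fun _ => t0 + ε)
    (x := t0) (y := y0) (r := t0 + ε) (B := |y0| + C) (ψ := ψ)
    tendsto_const_nhds tendsto_const_nhds tendsto_const_nhds
    (by linarith) (by positivity) hGt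
    (Eventually.of_forall fun _ => show t0 ≤ t0 + ε by linarith)
    (Eventually.of_forall fun n => hfeq n)
    (Eventually.of_forall fun n t => hψbd n t)
    (Eventually.of_forall fun n t => show ψ n t = ψ n (max t0 (min t (t0+ε))) by
      simp only [hψdef]
      rw [clamp_eq (clamp_mem (by linarith : t0 ≤ t0 + ε))])
    (Eventually.of_forall fun n => hψcont n)
  have hx0 : φ t0 = y0 := by
    have := hφeq t0 ⟨le_rfl, by linarith⟩
    simpa using this
  have hmemQ : ∀ t ∈ Icc t0 (t0+ε), (t, φ t) ∈ Q := by
    intro t ht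
    have h1 := hφeq t ht
    have h2 : |φ t - y0| ≤ C * ε := by
      rw [h1, add_sub_cancel_left]
      have h3 := intervalIntegral.norm_integral_le_of_norm_le_const (C := C)
        (f := fun s => Ftc (s, φ s)) (a := t0) (b := t)
        (fun s _ => by rw [Real.norm_eq_abs]; exact hFtbd _)
      rw [Real.norm_eq_abs] at h3
      refine le_trans h3 ?_
      rw [abs_of_nonneg (by linarith [ht.1])]
      exact mul_le_mul_of_nonneg_left (by linarith [ht.2]) hC0
    have h3 : C * ε ≤ C / (C+1) := by
      have := mul_le_mul_of_nonneg_left hε2 hC0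
      calc C * ε ≤ C * (1/(C+1)) := this
        _ = C / (C+1) := by ring
    have h4 : C / (C+1) < 1 := (div_lt_one (by linarith)).2 (by linarith)
    have h5 := abs_le.1 (le_trans h2 (by linarith : C * ε ≤ 1))
    exact ⟨⟨ht.1, le_trans ht.2 (by linarith)⟩, ⟨by linarith [h5.1], by linarith [h5.2]⟩⟩
  have hφeqF : ∀ t ∈ Icc t0 (t0+ε), φ t = y0 + ∫ s in t0..t, F (s, φ s) := by
    intro t ht
    rw [hφeq t ht]
    congr 1
    apply intervalIntegral.integral_congr
    intro s hs
    rw [Set.uIcc_of_le ht.1] at hs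
    have hs' : s ∈ Icc t0 (t0+ε) := ⟨hs.1, le_trans hs.2 ht.2⟩
    show Ftc (s, φ s) = F (s, φ s)
    have : Ft (s, φ s) = F (s, φ s) := by
      simp only [hFtdef]
      rw [hclid _ (hmemQ s hs')]
    exact this
  have hFφc2 : Continuous fun s => F (s, φ s) :=
    F.continuous.comp (continuous_id.prodMk hφc)
  exact ⟨ε, hε, φ, hx0, deriv_of_integral_form hFφc2 hφeqF⟩

lemma Dom_mono {x : ℝ} {a b : EReal} (h : a ≤ b) : Dom x a ⊆ Dom x b :=
  fun t ht => ⟨ht.1, lt_of_lt_of_le ht.2 h⟩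

lemma Dom_coe (x b : ℝ) : Dom x ((b : ℝ) : EReal) = Ico x b := by
  ext t
  exact and_congr_right fun _ => EReal.coe_lt_coe_iff

lemma exists_solPlus_ext (F : C(ℝ × ℝ, ℝ)) (x y : ℝ) (d : EReal) (φ0 : ℝ → ℝ)
    (h0 : PSol F x y d φ0) :
    ∃ (c : EReal) (ψ : ℝ → ℝ), SolPlus F x y c ψ ∧ d ≤ c ∧ ∀ t ∈ Dom x d, ψ t = φ0 t := by
  let α := {p : EReal × (ℝ → ℝ) // PSol F x y p.1 p.2 ∧ d ≤ p.1 ∧ ∀ t ∈ Dom x d, p.2 t = φ0 t}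
  let rel : α → α → Prop := fun p q => p.1.1 ≤ q.1.1 ∧ ∀ t ∈ Dom x p.1.1, q.1.2 t = p.1.2 t
  have htrans : ∀ {a b c : α}, rel a b → rel b c → rel a c := by
    rintro a b c ⟨h1, h2⟩ ⟨h3, h4⟩
    exact ⟨le_trans h1 h3, fun t ht => by rw [h4 t (Dom_mono h1 ht), h2 t ht]⟩
  have hbase : α := ⟨(d, φ0), h0, le_refl _, fun t _ => rfl⟩
  have hchains : ∀ ch : Set α, IsChain rel ch → ∃ ub, ∀ a ∈ ch, rel a ub := by
    intro ch hch
    rcases ch.eq_empty_or_nonempty with hemp | ⟨p₀, hp₀⟩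
    · exact ⟨hbase, by simp [hemp]⟩
    set dstar := sSup ((fun p : α => p.1.1) '' ch) with hds
    have hdle : ∀ p ∈ ch, p.1.1 ≤ dstar := fun p hp => le_sSup ⟨p, hp, rfl⟩
    have hkey : ∀ t : ℝ, (t : EReal) < dstar → ∃ p, p ∈ ch ∧ (t : EReal) < p.1.1 := by
      intro t ht
      obtain ⟨e, ⟨p, hp, rfl⟩, hlt⟩ := lt_sSup_iff.1 ht
      exact ⟨p, hp, hlt⟩
    set ψs : ℝ → ℝ := fun t =>
      if hex : ∃ p : α, p ∈ ch ∧ (t : EReal) < p.1.1 then hex.choose.1.2 t else φ0 t with hψs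
    have hagree : ∀ p ∈ ch, ∀ q ∈ ch, ∀ t : ℝ, x ≤ t → (t : EReal) < p.1.1 →
        (t : EReal) < q.1.1 → p.1.2 t = q.1.2 t := by
      intro p hp q hq t hxt hpt hqt
      rcases eq_or_ne p q with rfl | hne
      · rfl
      rcases hch hp hq hne with h | h
      · exact (h.2 t ⟨hxt, hpt⟩).symm
      · exact h.2 t ⟨hxt, hqt⟩
    have hψcons : ∀ p ∈ ch, ∀ t ∈ Dom x p.1.1, ψs t = p.1.2 t := by
      intro p hp t ht
      have hex : ∃ q : α, q ∈ ch ∧ (t : EReal) < q.1.1 := ⟨p, hp, ht.2⟩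
      simp only [hψs, dif_pos hex]
      exact hagree _ hex.choose_spec.1 p hp t ht.1 hex.choose_spec.2 ht.2
    have hPS : PSol F x y dstar ψs := by
      refine ⟨lt_of_lt_of_le p₀.2.1.1 (hdle p₀ hp₀), ?_, ?_⟩
      · have hx0 : x ∈ Dom x p₀.1.1 := ⟨le_refl x, p₀.2.1.1⟩
        rw [hψcons p₀ hp₀ x hx0]
        exact p₀.2.1.2.1
      · intro t ht
        obtain ⟨p, hp, hpt⟩ := hkey t ht.2
        obtain ⟨u, hu1, hu2⟩ := EReal.lt_iff_exists_rat_btwn.1 hpt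
        have hs' : Dom x dstar ∩ Iio ((u : ℝ)) ∈ 𝓝[Dom x dstar] t :=
          inter_mem_nhdsWithin _ (Iio_mem_nhds (by exact_mod_cast hu1))
        have hsub : Dom x dstar ∩ Iio ((u : ℝ)) ⊆ Dom x p.1.1 := by
          rintro w ⟨hw1, hw2⟩
          refine ⟨hw1.1, lt_trans ?_ hu2⟩
          exact_mod_cast hw2
        have hder := (p.2.1.2.2 t ⟨ht.1, hpt⟩).mono hsub
        have hder2 : HasDerivWithinAt ψs (F (t, p.1.2 t)) (Dom x dstar ∩ Iio ((u:ℝ))) t :=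
          hder.congr (fun w hw => hψcons p hp w (hsub hw)) (hψcons p hp t ⟨ht.1, hpt⟩)
        rw [hψcons p hp t ⟨ht.1, hpt⟩]
        exact hder2.mono_of_mem_nhdsWithin hs'
    refine ⟨⟨(dstar, ψs), hPS, le_trans p₀.2.2.1 (hdle p₀ hp₀), ?_⟩, ?_⟩
    · intro t ht
      show ψs t = φ0 t
      rw [hψcons p₀ hp₀ t (Dom_mono p₀.2.2.1 ht), p₀.2.2.2 t ht]
    · intro p hp
      exact ⟨hdle p hp, fun t ht => hψcons p hp t ht⟩
  obtain ⟨m, hm⟩ := exists_maximal_of_chains_bounded hchains (fun {a b c} => htrans)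
  refine ⟨m.1.1, m.1.2, ⟨m.2.1, ?_⟩, m.2.2.1, m.2.2.2⟩
  intro b' ψ' hb' hag hPS'
  have hext : ∀ t ∈ Dom x d, ψ' t = φ0 t := by
    intro t ht
    rw [hag t (Dom_mono m.2.2.1 ht), m.2.2.2 t ht]
  have hrel := hm ⟨(b', ψ'), hPS', le_trans m.2.2.1 hb'.le, hext⟩ ⟨hb'.le, hag⟩
  exact absurd (lt_of_lt_of_le hb' hrel.1) (lt_irrefl _)

lemma glue_psol (F : C(ℝ × ℝ, ℝ)) {x y r ε : ℝ} (hxr : x ≤ r) (hε : 0 < ε)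
    {φ g : ℝ → ℝ} (hφx : φ x = y)
    (hφ : ∀ t ∈ Icc x r, HasDerivWithinAt φ (F (t, φ t)) (Icc x r) t)
    (hgr : g r = φ r)
    (hg : ∀ t ∈ Icc r (r+ε), HasDerivWithinAt g (F (t, g t)) (Icc r (r+ε)) t) :
    PSol F x y (((r + ε : ℝ) : EReal)) (fun t => if t ≤ r then φ t else g t) := by
  set χ : ℝ → ℝ := fun t => if t ≤ r then φ t else g t with hχ
  have ag1 : ∀ w ∈ Icc x r, χ w = φ w := fun w hw => if_pos hw.2
  have ag2 : ∀ w ∈ Icc r (r+ε), χ w = g w := by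
    intro w hw
    by_cases hwr : w ≤ r
    · have hw' : w = r := le_antisymm hwr hw.1
      simp only [hχ]
      rw [if_pos hwr, hw', hgr]
    · simp only [hχ]
      rw [if_neg hwr]
  have hA : ∀ t ∈ Icc x r, HasDerivWithinAt χ (F (t, χ t)) (Icc x r) t := by
    intro t ht
    have h1 := (hφ t ht).congr ag1 (ag1 t ht)
    rw [ag1 t ht]
    exact h1
  have hB : ∀ t ∈ Icc r (r+ε), HasDerivWithinAt χ (F (t, χ t)) (Icc r (r+ε)) t := by
    intro t ht
    have h1 := (hg t ht).congr ag2 (ag2 t ht)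
    rw [ag2 t ht]
    exact h1
  have hun : Icc x r ∪ Icc r (r+ε) = Icc x (r+ε) := Icc_union_Icc_eq_Icc hxr (by linarith)
  have hIcc : ∀ t ∈ Icc x (r+ε), HasDerivWithinAt χ (F (t, χ t)) (Icc x (r+ε)) t := by
    intro t ht
    rcases lt_trichotomy t r with h | h | h
    · have h1 := hA t ⟨ht.1, h.le⟩
      refine h1.mono_of_mem_nhdsWithin ?_
      refine mem_of_superset (inter_mem_nhdsWithin _ (Iic_mem_nhds h)) ?_
      rintro w ⟨hw1, hw2⟩
      exact ⟨hw1.1, hw2⟩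
    · subst h
      have h1 := hA t ⟨ht.1, le_refl t⟩
      have h2 := hB t ⟨le_refl t, by linarith⟩
      have h3 := h1.union h2
      rwa [hun] at h3
    · have h1 := hB t ⟨h.le, ht.2⟩
      refine h1.mono_of_mem_nhdsWithin ?_
      refine mem_of_superset (inter_mem_nhdsWithin _ (Ici_mem_nhds h)) ?_
      rintro w ⟨hw1, hw2⟩
      exact ⟨hw2, hw1.2⟩
  refine ⟨?_, ?_, ?_⟩
  · exact_mod_cast (show x < r + ε by linarith)
  · show χ x = y
    simp only [hχ]
    rw [if_pos hxr, hφx]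
  · intro t ht
    rw [Dom_coe] at ht ⊢
    exact (hIcc t ⟨ht.1, ht.2.le⟩).mono Ico_subset_Icc_self

lemma refine_witness {N h M : ℕ} {b l : ℚ} {p : C(ℝ × ℝ, ℝ) × ℝ × ℝ}
    (hp : p ∈ Dset N h M b l) :
    ∃ (r : ℝ) (c : EReal) (φ : ℝ → ℝ), SolPlus p.1 p.2.1 p.2.2 c φ ∧
      p.2.1 + N ≤ r ∧ r ≤ p.2.1 + N + l ∧ SupNormLe φ p.2.1 (p.2.1 + N) h ∧
      (r : EReal) < c ∧ (∀ t ∈ Icc p.2.1 r, (b : ℝ) ≤ φ t) ∧ (M : ℝ) ≤ φ r ∧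
      (∀ t ∈ Icc p.2.1 r, |φ t| ≤ max (h : ℝ) (max (M : ℝ) |(b : ℝ)|)) := by
  obtain ⟨r, c, φ, hsol, h1, h2, h3, h4, h5, h6⟩ := hp
  set x := p.2.1 with hx
  have hNnn : (0:ℝ) ≤ (N:ℝ) := Nat.cast_nonneg N
  have hxN : x ≤ x + N := by linarith
  have hIccDom : Icc x r ⊆ Dom x c := by
    intro t ht
    exact ⟨ht.1, lt_of_le_of_lt (EReal.coe_le_coe_iff.2 ht.2) h4⟩
  have hφcont : ContinuousOn φ (Icc x r) := fun t ht =>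
    ((hsol.1.2.2 t (hIccDom ht)).continuousWithinAt).mono hIccDom
  set S : Set ℝ := Icc (x+N) r ∩ φ ⁻¹' (Ici (M:ℝ)) with hS
  have hrS : r ∈ S := ⟨⟨h1, le_refl r⟩, h6⟩
  have hSc : IsClosed S :=
    (hφcont.mono (Icc_subset_Icc_left hxN)).preimage_isClosed_of_isClosed
      isClosed_Icc isClosed_Ici
  have hSbdd : BddBelow S := ⟨x+N, fun t ht => ht.1.1⟩
  set r' := sInf S with hr'
  have hr'S : r' ∈ S := hSc.csInf_mem ⟨r, hrS⟩ hSbdd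
  have hr'le : r' ≤ r := csInf_le hSbdd hrS
  have hNr' : x + N ≤ r' := hr'S.1.1
  have hub : ∀ t ∈ Icc x r', φ t ≤ max (h:ℝ) (M:ℝ) := by
    intro t ht
    by_cases htN : t ≤ x + N
    · exact le_trans (le_of_abs_le (h3 t ⟨ht.1, htN⟩)) (le_max_left _ _)
    · push_neg at htN
      rcases lt_or_eq_of_le ht.2 with hlt | heq
      · have htS : t ∉ S := fun hmem => absurd (csInf_le hSbdd hmem) (not_le.2 hlt)
        have hnM : ¬ ((M:ℝ) ≤ φ t) := fun hMle =>
          htS ⟨⟨htN.le, le_trans ht.2 hr'le⟩, hMle⟩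
        exact le_trans (le_of_lt (not_le.1 hnM)) (le_max_right _ _)
      · rw [heq] at htN ⊢
        have hcl : r' ∈ closure (Ico (x+N) r') := by
          rw [closure_Ico (ne_of_lt htN)]
          exact ⟨htN.le, le_refl _⟩
        haveI hNB : (𝓝[Ico (x+N) r'] r').NeBot := mem_closure_iff_nhdsWithin_neBot.1 hcl
        have hsub2 : Ico (x+N) r' ⊆ Icc x r := by
          rintro w ⟨hw1, hw2⟩
          exact ⟨le_trans hxN hw1, le_trans hw2.le hr'le⟩
        have hconts : ContinuousWithinAt φ (Ico (x+N) r') r' :=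
          (hφcont r' ⟨le_trans hxN hNr', hr'le⟩).mono hsub2
        have hev : ∀ᶠ w in 𝓝[Ico (x+N) r'] r', φ w ≤ (M:ℝ) := by
          refine Filter.eventually_of_mem self_mem_nhdsWithin ?_
          rintro w ⟨hw1, hw2⟩
          by_contra hcon
          push_neg at hcon
          have hwS : w ∈ S := ⟨⟨hw1, le_trans hw2.le hr'le⟩, hcon.le⟩
          exact absurd (csInf_le hSbdd hwS) (not_le.2 hw2)
        exact le_trans (le_of_tendsto hconts hev) (le_max_right _ _)
  refine ⟨r', c, φ, hsol, hNr', le_trans hr'le h2, h3,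
    lt_of_le_of_lt (by exact_mod_cast hr'le : (r' : EReal) ≤ (r : EReal)) h4,
    fun t ht => h5 t ⟨ht.1, le_trans ht.2 hr'le⟩, hr'S.2, ?_⟩
  intro t ht
  rw [abs_le]
  constructor
  · have hb1 := h5 t ⟨ht.1, le_trans ht.2 hr'le⟩
    have hb2 : -(|(b:ℝ)|) ≤ (b:ℝ) := neg_abs_le _
    have hb3 : |(b:ℝ)| ≤ max (h:ℝ) (max (M:ℝ) |(b:ℝ)|) :=
      le_trans (le_max_right _ _) (le_max_right _ _)
    linarith
  · exact le_trans (hub t ht) (max_le (le_max_left _ _)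
      (le_trans (le_max_left _ _) (le_max_right _ _)))

/-- From the proof of lemma 5.19(a): for all `N, h, M ∈ ℕ` and all `b, ℓ ∈ ℚ`, the set
`D^M_{b,ℓ}` is a closed subset of `C(ℝ²) × ℝ²` (compact-open topology on `C(ℝ²)`). -/
theorem statement9 (N h M : ℕ) (b l : ℚ) : IsClosed (Dset N h M b l) := by
  rw [isClosed_iff_clusterPt]
  rintro ⟨F, x, y⟩ hp
  haveI hNB : (𝓝 ((F, x, y) : C(ℝ×ℝ,ℝ) × ℝ × ℝ) ⊓ 𝓟 (Dset N h M b l)).NeBot := hp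
  set U := Ultrafilter.of (𝓝 ((F, x, y) : C(ℝ×ℝ,ℝ) × ℝ × ℝ) ⊓ 𝓟 (Dset N h M b l)) with hUdef
  have hUle : (U : Filter _) ≤ 𝓝 (F, x, y) ⊓ 𝓟 (Dset N h M b l) := Ultrafilter.of_le _
  have hUD : ∀ᶠ q in U, q ∈ Dset N h M b l :=
    (le_trans hUle inf_le_right) (mem_principal_self _)
  have hUnh : (U : Filter _) ≤ 𝓝 (F, x, y) := le_trans hUle inf_le_left
  have hGs : Tendsto (fun q : C(ℝ×ℝ,ℝ) × ℝ × ℝ => q.1) U (𝓝 F) :=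
    (continuous_fst.tendsto _).mono_left hUnh
  have hxs : Tendsto (fun q : C(ℝ×ℝ,ℝ) × ℝ × ℝ => q.2.1) U (𝓝 x) :=
    ((continuous_fst.comp continuous_snd).tendsto _).mono_left hUnh
  have hys : Tendsto (fun q : C(ℝ×ℝ,ℝ) × ℝ × ℝ => q.2.2) U (𝓝 y) :=
    ((continuous_snd.comp continuous_snd).tendsto _).mono_left hUnh
  have hNnn : (0:ℝ) ≤ (N:ℝ) := Nat.cast_nonneg N
  set B : ℝ := max (h:ℝ) (max (M:ℝ) |(b:ℝ)|) with hBdef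
  have hB0 : 0 ≤ B := le_trans (Nat.cast_nonneg h) (le_max_left _ _)
  have hwit : ∀ q : C(ℝ×ℝ,ℝ) × ℝ × ℝ, ∃ (r : ℝ) (c : EReal) (φ : ℝ → ℝ),
      q ∈ Dset N h M b l → (SolPlus q.1 q.2.1 q.2.2 c φ ∧ q.2.1 + N ≤ r ∧
        r ≤ q.2.1 + N + l ∧ SupNormLe φ q.2.1 (q.2.1 + N) h ∧ (r : EReal) < c ∧
        (∀ t ∈ Icc q.2.1 r, (b:ℝ) ≤ φ t) ∧ (M:ℝ) ≤ φ r ∧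
        (∀ t ∈ Icc q.2.1 r, |φ t| ≤ B)) := by
    intro q
    by_cases hq : q ∈ Dset N h M b l
    · obtain ⟨r, c, φ, hs⟩ := refine_witness hq
      exact ⟨r, c, φ, fun _ => hs⟩
    · exact ⟨0, 0, 0, fun hmem => absurd hmem hq⟩
  choose rs cs φs hws using hwit
  have hEv := hUD.mono fun q hq => hws q hq
  -- limit of rs
  have hrsb : ∀ᶠ q in U, rs q ∈ Icc (x + N - 1) (x + N + l + 1) := by
    have e1 : ∀ᶠ q : C(ℝ×ℝ,ℝ) × ℝ × ℝ in U, x - 1 ≤ q.2.1 :=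
      hxs.eventually (eventually_ge_nhds (show x - 1 < x by linarith))
    have e2 : ∀ᶠ q : C(ℝ×ℝ,ℝ) × ℝ × ℝ in U, q.2.1 ≤ x + 1 :=
      hxs.eventually (eventually_le_nhds (show x < x + 1 by linarith))
    filter_upwards [e1, e2, hEv] with q h1 h2 h3
    exact ⟨by linarith [h3.2.1], by linarith [h3.2.2.1]⟩
  have hmemIcc : Icc (x + N - 1) (x + N + l + 1) ∈ (U.map rs : Filter ℝ) := by
    rw [Ultrafilter.coe_map, mem_map]
    exact hrsb
  obtain ⟨r, hrmem, hrconv⟩ := isCompact_iff_ultrafilter_le_nhds.1 isCompact_Icc (U.map rs)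
    (le_principal_iff.2 hmemIcc)
  have hr : Tendsto rs U (𝓝 r) := by rwa [Ultrafilter.coe_map] at hrconv
  have hrN : x + N ≤ r :=
    le_of_tendsto_of_tendsto (hxs.add tendsto_const_nhds) hr (hEv.mono fun q hq => hq.2.1)
  have hrl : r ≤ x + N + l :=
    le_of_tendsto_of_tendsto hr ((hxs.add tendsto_const_nhds).add tendsto_const_nhds)
      (hEv.mono fun q hq => hq.2.2.1)
  have hxr : x ≤ r := by linarith
  -- truncated solutions
  set ψs : (C(ℝ×ℝ,ℝ) × ℝ × ℝ) → ℝ → ℝ :=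
    fun q t => φs q (max q.2.1 (min t (rs q))) with hψsdef
  have hle' : ∀ᶠ q in U, q.2.1 ≤ rs q := hEv.mono fun q hq => by linarith [hq.2.1, hNnn]
  have hIccDom : ∀ q, q ∈ Dset N h M b l → Icc q.2.1 (rs q) ⊆ Dom q.2.1 (cs q) := by
    intro q hq t ht
    exact ⟨ht.1, lt_of_le_of_lt (EReal.coe_le_coe_iff.2 ht.2) (hws q hq).2.2.2.2.1⟩
  have hφscont : ∀ q, q ∈ Dset N h M b l → ContinuousOn (φs q) (Icc q.2.1 (rs q)) := by
    intro q hq t ht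
    exact (((hws q hq).1.1.2.2 t (hIccDom q hq ht)).continuousWithinAt).mono (hIccDom q hq)
  have hcont' : ∀ᶠ q in U, Continuous (ψs q) := by
    filter_upwards [hUD, hle'] with q hq hlq
    exact (hφscont q hq).comp_continuous
      (continuous_const.max (continuous_id.min continuous_const))
      (fun t => clamp_mem hlq)
  have hBψ : ∀ᶠ q in U, ∀ t, |ψs q t| ≤ B := by
    filter_upwards [hEv, hle'] with q hq hlq
    intro t
    exact hq.2.2.2.2.2.2.2 _ (clamp_mem hlq)
  have hclampψ : ∀ᶠ q in U, ∀ t, ψs q t = ψs q (max q.2.1 (min t (rs q))) := by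
    filter_upwards [hle'] with q hlq
    intro t
    show ψs q t = φs q (max q.2.1 (min (max q.2.1 (min t (rs q))) (rs q)))
    rw [clamp_eq (clamp_mem hlq)]
  have heq' : ∀ᶠ q in U, ∀ t ∈ Icc q.2.1 (rs q),
      ψs q t = q.2.2 + ∫ s in q.2.1..t, (q.1) (s, ψs q s) := by
    filter_upwards [hUD, hle', hcont'] with q hq hlq hcq
    have hgqc : Continuous fun s => q.1 (s, ψs q s) :=
      q.1.continuous.comp (continuous_id.prodMk hcq)
    have hder : ∀ t ∈ Icc q.2.1 (rs q),
        HasDerivWithinAt (φs q) (q.1 (t, ψs q t)) (Icc q.2.1 (rs q)) t := by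
      intro t ht
      have h1 := ((hws q hq).1.1.2.2 t (hIccDom q hq ht)).mono (hIccDom q hq)
      have h2 : ψs q t = φs q t := by
        show φs q (max q.2.1 (min t (rs q))) = φs q t
        rw [clamp_eq ht]
      rw [h2]
      exact h1
    have hif := integral_form hgqc hder
    intro t ht
    have h2 : ψs q t = φs q t := by
      show φs q (max q.2.1 (min t (rs q))) = φs q t
      rw [clamp_eq ht]
    rw [h2, hif t ht, (hws q hq).1.1.2.1]
  -- the limit solution on [x, r]
  obtain ⟨Φ, hΦc, hΦB, hΦeq, hmv⟩ := core U (G := fun q => q.1) (F := F)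
    (xs := fun q => q.2.1) (ys := fun q => q.2.2) (rs := rs) (ψ := ψs)
    hxs hys hr hxr hB0 hGs hle' heq' hBψ hclampψ hcont'
  have hΦder : ∀ t ∈ Icc x r, HasDerivWithinAt Φ (F (t, Φ t)) (Icc x r) t :=
    deriv_of_integral_form (F.continuous.comp (continuous_id.prodMk hΦc)) hΦeq
  have hΦx : Φ x = y := by
    have := hΦeq x ⟨le_refl x, hxr⟩
    simpa using this
  have hsup : ∀ t ∈ Icc x (x + N), |Φ t| ≤ (h:ℝ) := by
    intro t ht
    set ts : (C(ℝ×ℝ,ℝ) × ℝ × ℝ) → ℝ := fun q => max q.2.1 (min t (q.2.1 + N)) with htsdef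
    have htst : Tendsto ts U (𝓝 t) := by
      have h0 : Tendsto ts U (𝓝 (max x (min t (x + N)))) :=
        hxs.max (tendsto_const_nhds.min (hxs.add tendsto_const_nhds))
      rwa [min_eq_left ht.2, max_eq_right ht.1] at h0
    refine le_of_tendsto (hmv ts t htst).abs ?_
    filter_upwards [hEv] with q hq
    have hmemN : ts q ∈ Icc q.2.1 (q.2.1 + N) := clamp_mem (by linarith)
    have hmemR : ts q ∈ Icc q.2.1 (rs q) := ⟨hmemN.1, le_trans hmemN.2 hq.2.1⟩
    have he : ψs q (ts q) = φs q (ts q) := by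
      show φs q (max q.2.1 (min (ts q) (rs q))) = φs q (ts q)
      rw [clamp_eq hmemR]
    rw [he]
    exact hq.2.2.2.1 _ hmemN
  have hlow : ∀ t ∈ Icc x r, (b:ℝ) ≤ Φ t := by
    intro t ht
    set ts : (C(ℝ×ℝ,ℝ) × ℝ × ℝ) → ℝ := fun q => max q.2.1 (min t (rs q)) with htsdef
    have htst : Tendsto ts U (𝓝 t) := by
      have h0 : Tendsto ts U (𝓝 (max x (min t r))) :=
        hxs.max (tendsto_const_nhds.min hr)
      rwa [min_eq_left ht.2, max_eq_right ht.1] at h0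
    refine ge_of_tendsto (hmv ts t htst) ?_
    filter_upwards [hEv, hle'] with q hq hlq
    have hmemR : ts q ∈ Icc q.2.1 (rs q) := clamp_mem hlq
    have he : ψs q (ts q) = φs q (ts q) := by
      show φs q (max q.2.1 (min (ts q) (rs q))) = φs q (ts q)
      rw [clamp_eq hmemR]
    rw [he]
    exact hq.2.2.2.2.2.1 _ hmemR
  have hMr : (M:ℝ) ≤ Φ r := by
    refine ge_of_tendsto (hmv rs r hr) ?_
    filter_upwards [hEv, hle'] with q hq hlq
    have hmemR : rs q ∈ Icc q.2.1 (rs q) := ⟨hlq, le_refl _⟩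
    have he : ψs q (rs q) = φs q (rs q) := by
      show φs q (max q.2.1 (min (rs q) (rs q))) = φs q (rs q)
      rw [clamp_eq hmemR]
    rw [he]
    exact hq.2.2.2.2.2.2.1
  -- extend by Peano + Zorn
  obtain ⟨ε, hε, g, hg0, hgd⟩ := peano F r (Φ r)
  have hPSχ := glue_psol F hxr hε hΦx hΦder hg0 hgd
  obtain ⟨c', ψ', hSol', hlec', hagree'⟩ := exists_solPlus_ext F x y _ _ hPSχ
  have hrc' : (r : EReal) < c' :=
    lt_of_lt_of_le (EReal.coe_lt_coe_iff.2 (by linarith)) hlec'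
  have hagIcc : ∀ t ∈ Icc x r, ψ' t = Φ t := by
    intro t ht
    have hmem : t ∈ Dom x (((r + ε : ℝ)) : EReal) := by
      rw [Dom_coe]
      exact ⟨ht.1, by linarith [ht.2]⟩
    rw [hagree' t hmem]
    show (if t ≤ r then Φ t else g t) = Φ t
    rw [if_pos ht.2]
  refine ⟨r, c', ψ', hSol', hrN, hrl, ?_, hrc', ?_, ?_⟩
  · intro t ht
    rw [hagIcc t ⟨ht.1, le_trans ht.2 hrN⟩]
    exact hsup t ht
  · intro t ht
    rw [hagIcc t ht]
    exact hlow t ht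
  · rw [hagIcc r ⟨hxr, le_refl r⟩]
    exact hMr
end
end

section
/- For all M, N, h ∈ ℕ with M ≥ N and every positive rational ℓ, the set E_ℓ is a closed subset of C(ℝ²) × ℝ², and B^M_{N,h} = ⋃_{ℓ∈ℚ⁺} E_ℓ. -/
open Set Filter Topology
open scoped Classical

noncomputable section

/-- A set is `Σ⁰₂` if it is a countable union of closed sets. -/
def IsSigma02 {X : Type*} [TopologicalSpace X] (A : Set X) : Prop :=
  ∃ C : ℕ → Set X, (∀ n, IsClosed (C n)) ∧ A = ⋃ n, C n

/-- A set is `Π⁰₃` if it is a countable intersection of `Σ⁰₂` sets. -/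
def IsPi03 {X : Type*} [TopologicalSpace X] (A : Set X) : Prop :=
  ∃ S : ℕ → Set X, (∀ n, IsSigma02 (S n)) ∧ A = ⋂ n, S n

/-- A set is `Σ⁰₄` if it is a countable union of `Π⁰₃` sets. -/
def IsSigma04 {X : Type*} [TopologicalSpace X] (A : Set X) : Prop :=
  ∃ P : ℕ → Set X, (∀ n, IsPi03 (P n)) ∧ A = ⋃ n, P n

/-- `A⁺_{N,h}`: the Cauchy problems with a solution having a vertical asymptote to `+∞`
at some `ξ > x + N` and bounded by `h` on `[x, x+N]`. -/
def Aplus (N h : ℕ) : Set (C(ℝ × ℝ, ℝ) × ℝ × ℝ) :=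
  {p | ∃ (ξ : ℝ) (φ : ℝ → ℝ), p.2.1 + N < ξ ∧ SolPlus p.1 p.2.1 p.2.2 (ξ : EReal) φ ∧
    LimPlusTop φ (ξ : EReal) ∧ SupNormLe φ p.2.1 (p.2.1 + N) h}

/-- `A⁻_{N,h}`: as `A⁺_{N,h}`, with `lim₊ φ = -∞` instead of `lim₊ φ = +∞`. -/
def Aminus (N h : ℕ) : Set (C(ℝ × ℝ, ℝ) × ℝ × ℝ) :=
  {p | ∃ (ξ : ℝ) (φ : ℝ → ℝ), p.2.1 + N < ξ ∧ SolPlus p.1 p.2.1 p.2.2 (ξ : EReal) φ ∧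
    LimPlusBot φ (ξ : EReal) ∧ SupNormLe φ p.2.1 (p.2.1 + N) h}

/-- `A⁺_N`: the Cauchy problems with a solution having a vertical asymptote to `+∞`
at some `ξ > x + N`. -/
def AplusN (N : ℕ) : Set (C(ℝ × ℝ, ℝ) × ℝ × ℝ) :=
  {p | ∃ (ξ : ℝ) (φ : ℝ → ℝ), p.2.1 + N < ξ ∧ SolPlus p.1 p.2.1 p.2.2 (ξ : EReal) φ ∧
    LimPlusTop φ (ξ : EReal)}

/-- `A⁻_N`: as `A⁺_N`, with `lim₊ φ = -∞` instead of `lim₊ φ = +∞`. -/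
def AminusN (N : ℕ) : Set (C(ℝ × ℝ, ℝ) × ℝ × ℝ) :=
  {p | ∃ (ξ : ℝ) (φ : ℝ → ℝ), p.2.1 + N < ξ ∧ SolPlus p.1 p.2.1 p.2.2 (ξ : EReal) φ ∧
    LimPlusBot φ (ξ : EReal)}

/-- `B^M_{N,h}`: the Cauchy problems with a solution defined (at least) on `[x, x+M]`
and bounded by `h` on `[x, x+N]`. -/
def Bset (M N h : ℕ) : Set (C(ℝ × ℝ, ℝ) × ℝ × ℝ) :=
  {p | ∃ (b : EReal) (φ : ℝ → ℝ), SolPlus p.1 p.2.1 p.2.2 b φ ∧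
    ((p.2.1 + M : ℝ) : EReal) < b ∧ SupNormLe φ p.2.1 (p.2.1 + N) h}

/-- `E_ℓ` (for fixed `M, N, h`): the set of `(F, x, y)` for which some `φ ∈ S⁺_{F,(x,y)}`
satisfies `[x, x+M] ⊆ dom(φ)`, `‖φ ↾ [x, x+M]‖_∞ ≤ ℓ` and `‖φ ↾ [x, x+N]‖_∞ ≤ h`. -/
def Eset (M N h : ℕ) (l : ℚ) : Set (C(ℝ × ℝ, ℝ) × ℝ × ℝ) :=
  {p | ∃ (b : EReal) (φ : ℝ → ℝ), SolPlus p.1 p.2.1 p.2.2 b φ ∧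
    ((p.2.1 + M : ℝ) : EReal) < b ∧ SupNormLe φ p.2.1 (p.2.1 + M) l ∧
    SupNormLe φ p.2.1 (p.2.1 + N) h}


namespace Statement11

/-! ### Basic lemmas about solutions on closed intervals -/

/-- Solution of the ODE on the closed interval `[x, x+L]`. -/
def SolOn (F : C(ℝ × ℝ, ℝ)) (x y L : ℝ) (φ : ℝ → ℝ) : Prop :=
  φ x = y ∧ ∀ t ∈ Icc x (x + L), HasDerivWithinAt φ (F (t, φ t)) (Icc x (x + L)) t

lemma SolOn.continuousOn {F : C(ℝ × ℝ, ℝ)} {x y L : ℝ} {φ : ℝ → ℝ} (h : SolOn F x y L φ) :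
    ContinuousOn φ (Icc x (x + L)) := fun t ht => (h.2 t ht).continuousWithinAt

lemma dom_mono {x : ℝ} {b b' : EReal} (h : b ≤ b') : Dom x b ⊆ Dom x b' :=
  fun _ ht => ⟨ht.1, lt_of_lt_of_le ht.2 h⟩

lemma dom_coe (x c : ℝ) : Dom x ((c : ℝ) : EReal) = Ico x c := by
  ext t; simp [Dom, EReal.coe_lt_coe_iff, mem_Ico]

lemma Icc_subset_dom {x L : ℝ} {b : EReal} (hL : 0 ≤ L) (hb : ((x + L : ℝ) : EReal) < b) :
    Icc x (x + L) ⊆ Dom x b := fun t ht =>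
  ⟨ht.1, lt_of_le_of_lt (EReal.coe_le_coe_iff.2 ht.2) hb⟩

lemma PSol.solOn {F : C(ℝ × ℝ, ℝ)} {x y L : ℝ} {φ : ℝ → ℝ} {b : EReal} (h : PSol F x y b φ)
    (hL : 0 ≤ L) (hb : ((x + L : ℝ) : EReal) < b) : SolOn F x y L φ :=
  ⟨h.2.1, fun t ht => (h.2.2 t (Icc_subset_dom hL hb ht)).mono (Icc_subset_dom hL hb)⟩

lemma SolOn.integral_eq {F : C(ℝ × ℝ, ℝ)} {x y L : ℝ} {φ : ℝ → ℝ} (h : SolOn F x y L φ)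
    {t : ℝ} (ht : t ∈ Icc x (x + L)) : φ t = y + ∫ s in x..t, F (s, φ s) := by
  have hsub : Icc x t ⊆ Icc x (x + L) := Icc_subset_Icc le_rfl ht.2
  have hcont : ContinuousOn (fun s => F (s, φ s)) (Icc x (x + L)) :=
    F.continuous.comp_continuousOn (continuousOn_id.prodMk h.continuousOn)
  have hint : IntervalIntegrable (fun s => F (s, φ s)) MeasureTheory.volume x t :=
    ContinuousOn.intervalIntegrable (by rw [uIcc_of_le ht.1]; exact hcont.mono hsub)
  have key := intervalIntegral.integral_eq_sub_of_hasDeriv_right_of_le ht.1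
    (h.continuousOn.mono hsub)
    (fun s hs => (((h.2 s ⟨le_of_lt hs.1, le_trans (le_of_lt hs.2) ht.2⟩).hasDerivAt
        (Icc_mem_nhds hs.1 (lt_of_lt_of_le hs.2 ht.2))).hasDerivWithinAt)) hint
  rw [key, h.1]; ring

lemma solOn_of_integral {F : C(ℝ × ℝ, ℝ)} {x y L : ℝ} {φ : ℝ → ℝ} (hφ : Continuous φ)
    (hL : 0 ≤ L)
    (heq : ∀ t ∈ Icc x (x + L), φ t = y + ∫ s in x..t, F (s, φ s)) :
    SolOn F x y L φ := by
  have hg : Continuous fun s => F (s, φ s) := F.continuous.comp (continuous_id.prodMk hφ)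
  constructor
  · have := heq x ⟨le_rfl, by linarith⟩
    simpa [intervalIntegral.integral_same] using this
  · intro t ht
    have H : HasDerivAt (fun u => y + ∫ s in x..u, F (s, φ s)) (F (t, φ t)) t :=
      HasDerivAt.const_add y (intervalIntegral.integral_hasDerivAt_right
        (hg.intervalIntegrable x t)
        (hg.stronglyMeasurableAtFilter MeasureTheory.volume (𝓝 t)) hg.continuousAt)
    exact H.hasDerivWithinAt.congr (fun s hs => heq s hs) (heq t ht)

/-! ### Zorn extension to a non-extendible solution -/

lemma PSol.exists_solPlus {F : C(ℝ × ℝ, ℝ)} {x y : ℝ} {b : EReal} {φ : ℝ → ℝ}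
    (h : PSol F x y b φ) :
    ∃ (b' : EReal) (φ' : ℝ → ℝ), b ≤ b' ∧ (∀ t ∈ Dom x b, φ' t = φ t) ∧
      SolPlus F x y b' φ' := by
  let α := {q : EReal × (ℝ → ℝ) // PSol F x y q.1 q.2 ∧ b ≤ q.1 ∧ ∀ t ∈ Dom x b, q.2 t = φ t}
  let r : α → α → Prop := fun q q' => q.1.1 ≤ q'.1.1 ∧ ∀ t ∈ Dom x q.1.1, q'.1.2 t = q.1.2 t
  have hchain : ∀ c : Set α, IsChain r c → ∃ ub, ∀ a ∈ c, r a ub := by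
    intro c hc
    rcases c.eq_empty_or_nonempty with rfl | ⟨q₀, hq₀⟩
    · exact ⟨⟨(b, φ), h, le_rfl, fun t _ => rfl⟩, by simp⟩
    set B : EReal := sSup ((fun q : α => q.1.1) '' c) with hB
    set ψ : ℝ → ℝ := fun t => if hex : ∃ q : α, q ∈ c ∧ t ∈ Dom x q.1.1
      then hex.choose.1.2 t else 0 with hψdef
    have hψ : ∀ q ∈ c, ∀ t ∈ Dom x q.1.1, ψ t = q.1.2 t := by
      intro q hq t ht
      have hex : ∃ q' : α, q' ∈ c ∧ t ∈ Dom x q'.1.1 := ⟨q, hq, ht⟩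
      rw [hψdef]; simp only [dif_pos hex]
      obtain ⟨hq'c, ht'⟩ := hex.choose_spec
      set q' := hex.choose
      rcases eq_or_ne q' q with rfl | hne
      · rfl
      rcases hc hq'c hq hne with h1 | h2
      · exact (h1.2 t ht').symm
      · exact h2.2 t ht
    have hxB : (x : EReal) < B := lt_of_lt_of_le q₀.2.1.1 (le_sSup ⟨q₀, hq₀, rfl⟩)
    have hPB : PSol F x y B ψ := by
      refine ⟨hxB, ?_, ?_⟩
      · rw [hψ q₀ hq₀ x ⟨le_rfl, q₀.2.1.1⟩]; exact q₀.2.1.2.1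
      · intro t ht
        obtain ⟨e, ⟨q, hq, rfl⟩, hte⟩ := lt_sSup_iff.mp ht.2
        have ht' : t ∈ Dom x q.1.1 := ⟨ht.1, hte⟩
        have hd := q.2.1.2.2 t ht'
        have hmem : Dom x q.1.1 ∈ 𝓝[Dom x B] t := by
          refine mem_nhdsWithin.mpr ⟨{s : ℝ | (s : EReal) < q.1.1}, ?_, hte, ?_⟩
          · exact isOpen_Iio.preimage continuous_coe_real_ereal
          · exact fun s hs => ⟨hs.2.1, hs.1⟩
        have hd2 := hd.mono_of_mem_nhdsWithin hmem
        have heq : ψ t = q.1.2 t := hψ q hq t ht'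
        rw [heq]
        refine hd2.congr_of_eventuallyEq ?_ heq
        exact Filter.eventually_of_mem hmem (fun s hs => hψ q hq s hs)
    refine ⟨⟨(B, ψ), hPB, le_trans q₀.2.2.1 (le_sSup ⟨q₀, hq₀, rfl⟩), ?_⟩, ?_⟩
    · intro t ht
      show ψ t = φ t
      rw [hψ q₀ hq₀ t (dom_mono q₀.2.2.1 ht)]
      exact q₀.2.2.2 t ht
    · intro a ha
      exact ⟨le_sSup ⟨a, ha, rfl⟩, fun t ht => hψ a ha t ht⟩
  obtain ⟨m, hm⟩ := exists_maximal_of_chains_bounded hchain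
    (fun {a b' c} hab hbc => ⟨hab.1.trans hbc.1,
      fun t ht => (hbc.2 t (dom_mono hab.1 ht)).trans (hab.2 t ht)⟩)
  refine ⟨m.1.1, m.1.2, m.2.2.1, m.2.2.2, m.2.1, ?_⟩
  intro b'' ψ' hb'' hagree hPS
  have ha : PSol F x y b'' ψ' ∧ b ≤ b'' ∧ ∀ t ∈ Dom x b, ψ' t = φ t := by
    refine ⟨hPS, m.2.2.1.trans hb''.le, fun t ht => ?_⟩
    rw [hagree t (dom_mono m.2.2.1 ht)]
    exact m.2.2.2 t ht
  have hma : r m ⟨(b'', ψ'), ha⟩ := ⟨hb''.le, hagree⟩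
  exact absurd ((hm _ hma).1) (not_le.mpr hb'')

/-! ### Gluing a solution with a local solution at its right endpoint -/

lemma SolOn.glue {F : C(ℝ × ℝ, ℝ)} {x y L ε : ℝ} {φ χ : ℝ → ℝ} (hL : 0 ≤ L) (hε : 0 < ε)
    (hφ : SolOn F x y L φ) (hχ : SolOn F (x + L) (φ (x + L)) ε χ) :
    PSol F x y ((x + L + ε : ℝ) : EReal) (fun t => if t ≤ x + L then φ t else χ t) := by
  set g : ℝ → ℝ := fun t => if t ≤ x + L then φ t else χ t with hg
  have hgφ : ∀ s, s ≤ x + L → g s = φ s := fun s hs => if_pos hs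
  have hgχ : ∀ s, x + L ≤ s → g s = χ s := by
    intro s hs
    rcases lt_or_eq_of_le hs with hlt | heq
    · exact if_neg (not_le.mpr hlt)
    · rw [← heq, hgφ _ le_rfl, hχ.1]
  refine ⟨EReal.coe_lt_coe_iff.2 (by linarith), by rw [hgφ x (by linarith)]; exact hφ.1, ?_⟩
  intro t ht
  rw [dom_coe] at ht
  set D := Ico x (x + L + ε) with hD
  have hDeq : Dom x ((x + L + ε : ℝ) : EReal) = D := dom_coe _ _
  rw [hDeq]
  set A := D ∩ Iic (x + L) with hA
  set Bs := D ∩ Ici (x + L) with hBs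
  have hABD : A ∪ Bs = D := by
    rw [hA, hBs, ← inter_union_distrib_left, Iic_union_Ici, inter_univ]
  have hAsub : A ⊆ Icc x (x + L) := fun s hs => ⟨hs.1.1, hs.2⟩
  have hBsub : Bs ⊆ Icc (x + L) (x + L + ε) := fun s hs => ⟨hs.2, le_of_lt hs.1.2⟩
  have hdA : HasDerivWithinAt g (F (t, g t)) A t := by
    by_cases htL : t ≤ x + L
    · rw [hgφ t htL]
      exact ((hφ.2 t ⟨ht.1, htL⟩).mono hAsub).congr (fun s hs => hgφ s hs.2) (hgφ t htL)
    · refine hasDerivWithinAt_iff_hasFDerivWithinAt.2 (HasFDerivWithinAt.of_notMem_closure ?_)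
      intro hmem
      have hcl : closure A ⊆ Iic (x + L) := closure_minimal (fun s hs => hs.2) isClosed_Iic
      exact htL (hcl hmem)
  have hdB : HasDerivWithinAt g (F (t, g t)) Bs t := by
    by_cases htL : x + L ≤ t
    · rw [hgχ t htL]
      have hmem : t ∈ Icc (x + L) (x + L + ε) := ⟨htL, le_of_lt ht.2⟩
      exact ((hχ.2 t hmem).mono hBsub).congr (fun s hs => hgχ s hs.2) (hgχ t htL)
    · refine hasDerivWithinAt_iff_hasFDerivWithinAt.2 (HasFDerivWithinAt.of_notMem_closure ?_)
      intro hmem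
      have hcl : closure Bs ⊆ Ici (x + L) := closure_minimal (fun s hs => hs.2) isClosed_Ici
      exact htL (hcl hmem)
  have := hdA.union hdB
  rwa [hABD] at this

/-! ### Peano existence theorem (to be proved below) -/

/-! ### The Arzelà–Ascoli core compactness lemma -/

lemma core {F : C(ℝ × ℝ, ℝ)} {Fn : ℕ → C(ℝ × ℝ, ℝ)} {x y : ℝ} {xn yn : ℕ → ℝ}
    {φn : ℕ → ℝ → ℝ} {L C : ℝ} (hL : 0 ≤ L) (hC : 0 ≤ C)
    {K₀ : Set (ℝ × ℝ)} (hK₀ : IsCompact K₀)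
    (hconv : TendstoUniformlyOn (fun n z => Fn n z) F atTop K₀)
    (hx : Tendsto xn atTop (𝓝 x)) (hy : Tendsto yn atTop (𝓝 y))
    (hsol : ∀ᶠ n in atTop, SolOn (Fn n) (xn n) (yn n) L (φn n))
    (hmem : ∀ᶠ n in atTop, ∀ u ∈ Icc (0:ℝ) L, (xn n + u, φn n (xn n + u)) ∈ K₀)
    (hbd : ∀ᶠ n in atTop, ∀ u ∈ Icc (0:ℝ) L, |φn n (xn n + u)| ≤ C) :
    ∃ (φ : ℝ → ℝ) (σ : ℕ → ℕ), StrictMono σ ∧ SolOn F x y L φ ∧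
      (∀ u ∈ Icc (0:ℝ) L, |φ (x + u)| ≤ C) ∧
      ∀ u ∈ Icc (0:ℝ) L,
        Tendsto (fun n => φn (σ n) (xn (σ n) + u)) atTop (𝓝 (φ (x + u))) := by
  classical
  -- uniform bound `Bp` on the vector fields over `K₀`
  obtain ⟨B₀, hB₀⟩ := hK₀.exists_bound_of_continuousOn F.continuous.continuousOn
  set Bp : ℝ := max (B₀ + 1) 0 with hBp
  have hBp0 : 0 ≤ Bp := le_max_right _ _
  have hB1 : ∀ᶠ n in atTop, ∀ z ∈ K₀, |Fn n z| ≤ Bp := by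
    filter_upwards [Metric.tendstoUniformlyOn_iff.mp hconv 1 one_pos] with n hn z hz
    have h1 : dist (F z) (Fn n z) < 1 := hn z hz
    have h2 : |F z| ≤ B₀ := by simpa [Real.norm_eq_abs] using hB₀ z hz
    rw [Real.dist_eq] at h1
    calc |Fn n z| = |F z - (F z - Fn n z)| := by ring_nf
      _ ≤ |F z| + |F z - Fn n z| := abs_sub _ _
      _ ≤ B₀ + 1 := by linarith [le_of_lt h1]
      _ ≤ Bp := le_max_left _ _
  set Bnn : NNReal := Real.toNNReal Bp with hBnn
  have hBnncoe : (Bnn : ℝ) = Bp := Real.coe_toNNReal _ hBp0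
  set I : Set ℝ := Icc (0:ℝ) L with hI
  -- normalized solutions on `I`
  set f : ℕ → I → ℝ := fun n s => φn n (xn n + (s : ℝ)) with hf
  set P : ℕ → Prop :=
    fun n => LipschitzWith Bnn (f n) ∧ ∀ s : I, |f n s| ≤ C with hP
  set Ψ : ℕ → C(I, ℝ) := fun n => if hn : P n then ⟨f n, hn.1.continuous⟩ else
    ContinuousMap.const I 0 with hΨ
  set S : Set C(I, ℝ) := {g | LipschitzWith Bnn ⇑g ∧ ∀ s, |g s| ≤ C} with hS
  have hΨS : ∀ n, Ψ n ∈ S := by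
    intro n
    by_cases hn : P n
    · simp only [hΨ, dif_pos hn]; exact hn
    · simp only [hΨ, dif_neg hn]
      constructor
      · intro s t
        simp [edist_dist]
      · intro s; simp [hC]
  -- eventually, `Ψ n` is the normalized solution
  have hPev : ∀ᶠ n in atTop, P n := by
    filter_upwards [hsol, hmem, hbd, hB1] with n h1 h2 h3 h4
    constructor
    · have hlip : LipschitzOnWith Bnn (φn n) (Icc (xn n) (xn n + L)) := by
        apply (convex_Icc _ _).lipschitzOnWith_of_nnnorm_hasDerivWithin_le
          (f' := fun t => Fn n (t, φn n t)) (fun t ht => h1.2 t ht)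
        intro t ht
        have hu : t - xn n ∈ Icc (0:ℝ) L := ⟨by linarith [ht.1], by linarith [ht.2]⟩
        have := h4 _ (by simpa [add_sub_cancel] using h2 _ hu)
        rw [← NNReal.coe_le_coe, hBnncoe, coe_nnnorm, Real.norm_eq_abs]
        simpa [add_sub_cancel] using this
      intro s t
      have hs : xn n + (s:ℝ) ∈ Icc (xn n) (xn n + L) := ⟨by linarith [s.2.1], by linarith [s.2.2]⟩
      have ht : xn n + (t:ℝ) ∈ Icc (xn n) (xn n + L) := ⟨by linarith [t.2.1], by linarith [t.2.2]⟩
      have := hlip hs ht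
      simpa [hf, edist_dist, Subtype.dist_eq, Real.dist_eq, add_sub_add_left_eq_sub] using this
    · intro s
      exact h3 (s : ℝ) s.2
  -- compactness of `S`
  have hTcomp : IsCompact (ContinuousMap.toFun '' S) := by
    have himg : ContinuousMap.toFun '' S =
        {g : I → ℝ | (∀ s, g s ∈ Icc (-C) C) ∧
          ∀ s t : I, dist (g s) (g t) ≤ (Bnn : ℝ) * dist s t} := by
      apply Subset.antisymm
      · rintro _ ⟨g, hgS, rfl⟩
        refine ⟨fun s => ?_, fun s t => hgS.1.dist_le_mul s t⟩
        rw [mem_Icc]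
        exact abs_le.mp (hgS.2 s)
      · intro g hgT
        have hlip : LipschitzWith Bnn g := LipschitzWith.of_dist_le_mul hgT.2
        exact ⟨⟨g, hlip.continuous⟩, ⟨hlip, fun s => abs_le.mpr (hgT.1 s)⟩, rfl⟩
    rw [himg, setOf_and]
    apply IsCompact.of_isClosed_subset (isCompact_univ_pi (fun _ => isCompact_Icc))
    · apply IsClosed.inter
      · rw [setOf_forall]
        exact isClosed_iInter fun s => isClosed_Icc.preimage (continuous_apply s)
      · rw [setOf_forall]
        refine isClosed_iInter fun s => ?_
        rw [setOf_forall]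
        exact isClosed_iInter fun t => isClosed_le
          (((continuous_apply s).dist (continuous_apply t))) continuous_const
    · intro g hg
      exact fun s _ => hg.1 s
  have hScomp : IsCompact S := by
    apply ArzelaAscoli.isCompact_of_equicontinuous S hTcomp
    apply Metric.equicontinuous_of_continuity_modulus (fun d => (Bnn : ℝ) * d)
    · simpa using (continuous_mul_left (Bnn : ℝ)).tendsto' 0 0 (by simp)
    · intro s t i
      exact i.2.1.dist_le_mul s t
  -- extract a convergent subsequence
  obtain ⟨g, hgS, σ, hσ, hgconv⟩ := hScomp.tendsto_subseq hΨS
  have hptwΨ : ∀ s : I, Tendsto (fun n => Ψ (σ n) s) atTop (𝓝 (g s)) := fun s =>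
    ((continuous_eval_const s).tendsto g).comp hgconv
  have hσtop : Tendsto σ atTop atTop := hσ.tendsto_atTop
  have hptw : ∀ s : I, Tendsto (fun n => φn (σ n) (xn (σ n) + (s:ℝ))) atTop (𝓝 (g s)) := by
    intro s
    apply (hptwΨ s).congr'
    filter_upwards [hσtop.eventually hPev] with n hn
    simp [hΨ, dif_pos hn, hf]
  -- the limit function
  set φ : ℝ → ℝ := fun t => g (projIcc 0 L hL (t - x)) with hφ
  have hφc : Continuous φ := g.continuous.comp (continuous_projIcc.comp
    (continuous_id.sub continuous_const))
  have hφval : ∀ u (hu : u ∈ Icc (0:ℝ) L), φ (x + u) = g ⟨u, hu⟩ := by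
    intro u hu
    simp only [hφ, add_sub_cancel_left, projIcc_of_mem hL hu]
  have hxσ : Tendsto (fun n => xn (σ n)) atTop (𝓝 x) := hx.comp hσtop
  have hyσ : Tendsto (fun n => yn (σ n)) atTop (𝓝 y) := hy.comp hσtop
  have hconvσ : TendstoUniformlyOn (fun n z => Fn (σ n) z) F atTop K₀ :=
    fun u hu => hσtop.eventually (hconv u hu)
  -- the integral equation passes to the limit
  have hinteq : ∀ c (hc : c ∈ Icc (0:ℝ) L),
      g ⟨c, hc⟩ = y + ∫ u in (0:ℝ)..c, F (x + u, φ (x + u)) := by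
    intro c hc
    have hseq : ∀ᶠ n in atTop, φn (σ n) (xn (σ n) + c) =
        yn (σ n) + ∫ u in (0:ℝ)..c, Fn (σ n) (xn (σ n) + u, φn (σ n) (xn (σ n) + u)) := by
      filter_upwards [hσtop.eventually hsol] with n hn
      have h1 : xn (σ n) + c ∈ Icc (xn (σ n)) (xn (σ n) + L) :=
        ⟨by linarith [hc.1], by linarith [hc.2]⟩
      have h2 := hn.integral_eq h1
      rw [h2]
      congr 1
      have := intervalIntegral.integral_comp_add_left
        (fun s => Fn (σ n) (s, φn (σ n) s)) (xn (σ n)) (a := (0:ℝ)) (b := c)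
      rw [this, add_zero]
    have hIoc : Set.uIoc (0:ℝ) c ⊆ Icc (0:ℝ) L := by
      rw [uIoc_of_le hc.1]
      exact fun u hu => ⟨le_of_lt hu.1, le_trans hu.2 hc.2⟩
    have hlim2 : Tendsto (fun n => yn (σ n) +
        ∫ u in (0:ℝ)..c, Fn (σ n) (xn (σ n) + u, φn (σ n) (xn (σ n) + u))) atTop
        (𝓝 (y + ∫ u in (0:ℝ)..c, F (x + u, φ (x + u)))) := by
      apply hyσ.add
      apply intervalIntegral.tendsto_integral_filter_of_dominated_convergence (fun _ => Bp)
      · filter_upwards [hσtop.eventually hsol] with n hn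
        have hcont : ContinuousOn
            (fun u => Fn (σ n) (xn (σ n) + u, φn (σ n) (xn (σ n) + u))) (Icc (0:ℝ) L) := by
          apply (Fn (σ n)).continuous.comp_continuousOn
          apply ContinuousOn.prodMk
          · exact (continuous_const.add continuous_id).continuousOn
          · apply hn.continuousOn.comp (continuous_const.add continuous_id).continuousOn
            intro u hu
            simp only [id_eq, mem_Icc, Pi.add_apply]
            constructor <;> linarith [hu.1, hu.2]
        exact (hcont.mono hIoc).aestronglyMeasurable measurableSet_uIoc
      · filter_upwards [hσtop.eventually hmem, hσtop.eventually hB1] with n h2 h4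
        apply MeasureTheory.ae_of_all
        intro u hu
        rw [Real.norm_eq_abs]
        exact h4 _ (h2 u (hIoc hu))
      · exact intervalIntegrable_const
      · apply MeasureTheory.ae_of_all
        intro u hu
        have huL : u ∈ Icc (0:ℝ) L := hIoc hu
        have hzlim : Tendsto (fun n => (xn (σ n) + u, φn (σ n) (xn (σ n) + u))) atTop
            (𝓝[K₀] (x + u, φ (x + u))) := by
          rw [tendsto_nhdsWithin_iff]
          constructor
          · rw [hφval u huL]
            exact (hxσ.add_const u).prodMk_nhds (hptw ⟨u, huL⟩)
          · filter_upwards [hσtop.eventually hmem] with n hn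
            exact hn u huL
        exact hconvσ.tendsto_comp F.continuous.continuousAt.continuousWithinAt hzlim
    have hlim1 : Tendsto (fun n => φn (σ n) (xn (σ n) + c)) atTop (𝓝 (g ⟨c, hc⟩)) := hptw _
    have hlim1' : Tendsto (fun n => φn (σ n) (xn (σ n) + c)) atTop
        (𝓝 (y + ∫ u in (0:ℝ)..c, F (x + u, φ (x + u)))) := hlim2.congr' (by
      filter_upwards [hseq] with n hn; exact hn.symm)
    exact tendsto_nhds_unique hlim1 hlim1'
  -- the limit is a solution
  have heq2 : ∀ t ∈ Icc x (x + L), φ t = y + ∫ s in x..t, F (s, φ s) := by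
    intro t ht
    have hct : t - x ∈ Icc (0:ℝ) L := ⟨by linarith [ht.1], by linarith [ht.2]⟩
    have h1 : φ t = g ⟨t - x, hct⟩ := by
      have := hφval (t - x) hct
      rwa [add_sub_cancel] at this
    have h2 : ∫ s in x..t, F (s, φ s) = ∫ u in (0:ℝ)..(t - x), F (x + u, φ (x + u)) := by
      have := intervalIntegral.integral_comp_add_left
        (fun s => F (s, φ s)) x (a := (0:ℝ)) (b := t - x)
      rw [this, add_zero, add_sub_cancel]
    rw [h1, h2, hinteq (t - x) hct]
  have hsolφ : SolOn F x y L φ := solOn_of_integral hφc hL heq2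
  refine ⟨φ, σ, hσ, hsolφ, ?_, ?_⟩
  · intro u hu
    rw [hφval u hu]
    exact hgS.2 _
  · intro u hu
    rw [hφval u hu]
    exact hptw ⟨u, hu⟩


lemma clamp_mem (y : ℝ) (v : ℝ) : max (y - 1) (min v (y + 1)) ∈ Icc (y - 1) (y + 1) :=
  ⟨le_max_left _ _, max_le (by linarith) (min_le_right _ _)⟩

lemma clamp_eq {y v : ℝ} (hv : v ∈ Icc (y - 1) (y + 1)) :
    max (y - 1) (min v (y + 1)) = v := by
  rw [min_eq_left hv.2, max_eq_right hv.1]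

lemma clamp_lip (y : ℝ) (v w : ℝ) :
    |max (y - 1) (min v (y + 1)) - max (y - 1) (min w (y + 1))| ≤ |v - w| := by
  calc |max (y - 1) (min v (y + 1)) - max (y - 1) (min w (y + 1))|
      = |max (min v (y + 1)) (y - 1) - max (min w (y + 1)) (y - 1)| := by
        rw [max_comm (y - 1), max_comm (y - 1)]
    _ ≤ |min v (y + 1) - min w (y + 1)| := abs_max_sub_max_le_abs _ _ _
    _ = |min v (y + 1) - min w (y + 1)| := rfl
    _ ≤ max |v - w| |y + 1 - (y + 1)| := abs_min_sub_min_le_max _ _ _ _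
    _ ≤ |v - w| := by simp

lemma peano (F : C(ℝ × ℝ, ℝ)) (x y : ℝ) : ∃ ε > 0, ∃ χ : ℝ → ℝ, SolOn F x y ε χ := by
  classical
  set Kp : Set (ℝ × ℝ) := Icc x (x + 1) ×ˢ Icc (y - 1) (y + 1) with hKpdef
  have hKp : IsCompact Kp := isCompact_Icc.prod isCompact_Icc
  haveI : Nonempty Kp := ⟨⟨(x, y), ⟨le_rfl, by linarith⟩, ⟨by linarith, by linarith⟩⟩⟩
  obtain ⟨B₁, hB₁⟩ := hKp.exists_bound_of_continuousOn F.continuous.continuousOn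
  set B₀ : ℝ := max B₁ 0 with hB₀def
  have hB₀ : ∀ z ∈ Kp, |F z| ≤ B₀ := fun z hz => by
    rw [← Real.norm_eq_abs]; exact (hB₁ z hz).trans (le_max_left _ _)
  have hB₀0 : 0 ≤ B₀ := le_max_right _ _
  set B : ℝ := B₀ + 1 with hBdef
  have hB : 0 < B := by linarith
  set ε : ℝ := min 1 (1 / B) with hεdef
  have hε : 0 < ε := lt_min one_pos (by positivity)
  have hε1 : ε ≤ 1 := min_le_left _ _
  have hεB : B * ε ≤ 1 := by
    calc B * ε ≤ B * (1 / B) := by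
          apply mul_le_mul_of_nonneg_left (min_le_right _ _) hB.le
      _ = 1 := by field_simp
  set cl : ℝ → ℝ := fun v => max (y - 1) (min v (y + 1)) with hcl
  have hclc : Continuous cl := continuous_const.max (continuous_id.min continuous_const)
  -- the approximating Lipschitz vector fields, by inf-convolution
  set g : ℕ → ℝ × ℝ → ℝ := fun k z => ⨅ w : Kp, (F w + (k + 1) * dist z w) with hg
  have hbdd : ∀ (k : ℕ) (z : ℝ × ℝ),
      BddBelow (range fun w : Kp => F w + (k + 1) * dist z w) := by
    intro k z
    refine ⟨-B₀, ?_⟩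
    rintro r ⟨w, rfl⟩
    have h1 : |F w| ≤ B₀ := hB₀ w w.2
    have h2 : (0:ℝ) ≤ (k + 1) * dist z w := by positivity
    have := abs_le.mp h1
    simp only []
    linarith [this.1]
  have hglb : ∀ (k : ℕ) (z : ℝ × ℝ), -B₀ ≤ g k z := by
    intro k z
    apply le_ciInf
    intro w
    have := abs_le.mp (hB₀ w w.2)
    have h2 : (0:ℝ) ≤ (k + 1) * dist z w := by positivity
    linarith [this.1]
  have hgle : ∀ (k : ℕ), ∀ z ∈ Kp, g k z ≤ F z := by
    intro k z hz
    refine ciInf_le_of_le (hbdd k z) ⟨z, hz⟩ ?_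
    simp
  have hkey : ∀ (k : ℕ) (z z' : ℝ × ℝ), g k z - (k + 1) * dist z z' ≤ g k z' := by
    intro k z z'
    apply le_ciInf
    intro w
    rw [sub_le_iff_le_add]
    apply ciInf_le_of_le (hbdd k z) w
    have htri := dist_triangle z z' (w : ℝ × ℝ)
    have hk0 : (0:ℝ) ≤ (k + 1) := by positivity
    nlinarith [htri, hk0]
  have hglip : ∀ k : ℕ, LipschitzWith ((k : NNReal) + 1) (g k) := by
    intro k
    apply LipschitzWith.of_dist_le_mul
    intro z z'
    have h1 := hkey k z z'
    have h2 := hkey k z' z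
    rw [dist_comm z' z] at h2
    rw [Real.dist_eq]
    have hcast : ((((k : NNReal) + 1) : NNReal) : ℝ) = (k : ℝ) + 1 := by push_cast; ring
    rw [hcast]
    rw [abs_sub_le_iff]
    constructor <;> linarith
  have hgub : ∀ (k : ℕ), ∀ z ∈ Kp, |g k z| ≤ B₀ := by
    intro k z hz
    rw [abs_le]
    refine ⟨hglb k z, (hgle k z hz).trans ?_⟩
    exact (abs_le.mp (hB₀ z hz)).2
  -- uniform convergence of the approximations on `Kp`
  have huconv : TendstoUniformlyOn (fun k z => g k z) F atTop Kp := by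
    rw [Metric.tendstoUniformlyOn_iff]
    intro δ hδ
    obtain ⟨η, hη, hucont⟩ := Metric.uniformContinuousOn_iff.1
      (hKp.uniformContinuousOn_of_continuous F.continuous.continuousOn) (δ / 2) (half_pos hδ)
    obtain ⟨k₀, hk₀⟩ := exists_nat_ge (2 * B₀ / η)
    filter_upwards [Filter.eventually_ge_atTop k₀] with k hk z hz
    have hlow : F z - δ / 2 ≤ g k z := by
      apply le_ciInf
      intro w
      by_cases hdw : dist z (w : ℝ × ℝ) < η
      · have := hucont z hz w w.2 hdw
        rw [Real.dist_eq] at this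
        have h2 : (0:ℝ) ≤ (k + 1) * dist z w := by positivity
        have := abs_lt.mp this
        linarith [this.2]
      · push_neg at hdw
        have hkk : (2 * B₀ / η) * η ≤ ((k:ℝ) + 1) * η := by
          apply mul_le_mul_of_nonneg_right _ hη.le
          have : (k₀ : ℝ) ≤ (k : ℝ) := Nat.cast_le.2 hk
          linarith
        have h2B : 2 * B₀ ≤ ((k:ℝ) + 1) * η := by
          rwa [div_mul_cancel₀ _ (ne_of_gt hη)] at hkk
        have h3 : ((k:ℝ) + 1) * η ≤ (k + 1) * dist z w :=
          mul_le_mul_of_nonneg_left hdw (by positivity)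
        have h4 := abs_le.mp (hB₀ w w.2)
        have h5 := abs_le.mp (hB₀ z hz)
        linarith [h4.1, h5.2]
    have hupp := hgle k z hz
    rw [Real.dist_eq, abs_sub_comm, abs_lt]
    constructor <;> linarith
  -- the modified (clamped) vector fields
  set H : ℕ → C(ℝ × ℝ, ℝ) := fun k =>
    ⟨fun z => g k (z.1, cl z.2),
      (hglip k).continuous.comp (continuous_fst.prodMk (hclc.comp continuous_snd))⟩ with hH
  have hHbd : ∀ (k : ℕ) (t v : ℝ), t ∈ Icc x (x + ε) → |H k (t, v)| ≤ B := by
    intro k t v ht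
    have hmem : (t, cl v) ∈ Kp :=
      ⟨⟨ht.1, by linarith [ht.2, hε1]⟩, clamp_mem y v⟩
    calc |H k (t, v)| = |g k (t, cl v)| := rfl
      _ ≤ B₀ := hgub k _ hmem
      _ ≤ B := by linarith
  -- Picard–Lindelöf for each approximation
  have hsolk : ∀ k : ℕ, ∃ f : ℝ → ℝ, f x = y ∧
      ∀ t ∈ Icc x (x + ε), HasDerivWithinAt f (H k (t, f t)) (Icc x (x + ε)) t := by
    intro k
    have hpl : IsPicardLindelof (fun t v => H k (t, v)) (tmin := x) (tmax := x + ε)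
        ⟨x, ⟨le_rfl, by linarith⟩⟩ y 1 0 (Real.toNNReal B) ((k : NNReal) + 1) := by
      constructor
      · intro t _
        apply LipschitzWith.lipschitzOnWith
        apply LipschitzWith.of_dist_le_mul
        intro v w
        have h1 := (hglip k).dist_le_mul (t, cl v) (t, cl w)
        have h2 : dist ((t, cl v) : ℝ × ℝ) (t, cl w) ≤ dist v w := by
          rw [Prod.dist_eq]
          simp only [dist_self]
          rw [max_le_iff]
          refine ⟨dist_nonneg, ?_⟩
          rw [Real.dist_eq, Real.dist_eq]
          exact clamp_lip y v w
        calc dist (H k (t, v)) (H k (t, w)) = dist (g k (t, cl v)) (g k (t, cl w)) := rfl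
          _ ≤ (((k : NNReal) + 1) : NNReal) * dist ((t, cl v) : ℝ × ℝ) (t, cl w) := h1
          _ ≤ (((k : NNReal) + 1) : NNReal) * dist v w := by
              apply mul_le_mul_of_nonneg_left h2 (by positivity)
      · intro v _
        exact (H k).continuous.comp_continuousOn
          ((continuous_id.prodMk continuous_const).continuousOn)
      · intro t ht v _
        rw [Real.norm_eq_abs, Real.coe_toNNReal _ hB.le]
        exact hHbd k t v ht
      · have : max (x + ε - x) (x - x) = ε := by
          rw [max_eq_left (by linarith)]; ring
        rw [Real.coe_toNNReal _ hB.le]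
        simp only [this, NNReal.coe_one, NNReal.coe_zero, sub_zero]
        exact hεB
    obtain ⟨f, hf⟩ := hpl.exists_eq_forall_mem_Icc_hasDerivWithinAt₀
    exact ⟨f, hf⟩
  choose f hfx hfd using hsolk
  -- a priori bounds for the approximating solutions
  have hfbd : ∀ (k : ℕ), ∀ t ∈ Icc x (x + ε), |f k t - y| ≤ 1 := by
    intro k t ht
    have key := (convex_Icc x (x + ε)).norm_image_sub_le_of_norm_hasDerivWithin_le
      (f' := fun t => H k (t, f k t)) (fun s hs => hfd k s hs)
      (C := B) (fun s hs => by rw [Real.norm_eq_abs]; exact hHbd k s (f k s) hs)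
      (⟨le_rfl, by linarith [ht.1, ht.2, hε.le]⟩ : x ∈ Icc x (x + ε)) ht
    rw [hfx k, Real.norm_eq_abs, Real.norm_eq_abs] at key
    calc |f k t - y| ≤ B * |t - x| := key
      _ ≤ B * ε := by
          apply mul_le_mul_of_nonneg_left _ hB.le
          rw [abs_of_nonneg (by linarith [ht.1])]
          linarith [ht.2]
      _ ≤ 1 := hεB
  have hfsol : ∀ k : ℕ, SolOn (H k) x y ε (f k) := fun k => ⟨hfx k, hfd k⟩
  -- pass to the limit using the core lemma
  set K₀ : Set (ℝ × ℝ) := Icc x (x + ε) ×ˢ Icc (y - 1) (y + 1) with hK₀def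
  have hK₀ : IsCompact K₀ := isCompact_Icc.prod isCompact_Icc
  have hK₀Kp : K₀ ⊆ Kp := prod_mono (Icc_subset_Icc le_rfl (by linarith)) subset_rfl
  have hHconv : TendstoUniformlyOn (fun k z => H k z) F atTop K₀ := by
    apply TendstoUniformlyOn.congr (huconv.mono hK₀Kp)
    apply Filter.Eventually.of_forall
    intro k z hz
    show g k z = H k z
    have : cl z.2 = z.2 := clamp_eq hz.2
    calc g k z = g k (z.1, z.2) := by rw [Prod.mk.eta]
      _ = g k (z.1, cl z.2) := by rw [this]
      _ = H k z := rfl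
  have hcore := core (F := F) (Fn := H) (xn := fun _ => x) (yn := fun _ => y) (φn := f)
    hε.le (by positivity : (0:ℝ) ≤ |y| + 1) hK₀ hHconv tendsto_const_nhds tendsto_const_nhds
    (Filter.Eventually.of_forall hfsol) ?_ ?_
  · obtain ⟨φ, σ, hσ, hsolφ, _, _⟩ := hcore
    exact ⟨ε, hε, φ, hsolφ⟩
  · apply Filter.Eventually.of_forall
    intro k u hu
    have ht : x + u ∈ Icc x (x + ε) := ⟨by linarith [hu.1], by linarith [hu.2]⟩
    have := abs_le.mp (hfbd k (x + u) ht)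
    exact ⟨⟨ht.1, ht.2⟩, by constructor <;> [linarith [this.1]; linarith [this.2]]⟩
  · apply Filter.Eventually.of_forall
    intro k u hu
    have ht : x + u ∈ Icc x (x + ε) := ⟨by linarith [hu.1], by linarith [hu.2]⟩
    have h1 := abs_le.mp (hfbd k (x + u) ht)
    rw [abs_le]
    have h2 := abs_le.mp (le_refl |y|)
    constructor <;> [linarith [h1.1, neg_abs_le y]; linarith [h1.2, le_abs_self y]]

/-- Membership criterion for `Eset` from a solution on a closed interval. -/
lemma solOn_mem_Eset {M N h : ℕ} {l : ℚ} {F : C(ℝ × ℝ, ℝ)} {x y : ℝ} {φ : ℝ → ℝ} (hMN : N ≤ M)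
    (hsol : SolOn F x y M φ)
    (hl : ∀ t ∈ Icc x (x + (M : ℝ)), |φ t| ≤ (l : ℝ))
    (hh : ∀ t ∈ Icc x (x + (N : ℝ)), |φ t| ≤ (h : ℝ)) : (F, x, y) ∈ Eset M N h l := by
  obtain ⟨ε, hε, χ, hχ⟩ := peano F (x + M) (φ (x + M))
  have hglue := hsol.glue (Nat.cast_nonneg M) hε hχ
  obtain ⟨b', φ', hb'le, hagree, hsp⟩ := PSol.exists_solPlus hglue
  have hagr : ∀ t, x ≤ t → t ≤ x + (M : ℝ) → φ' t = φ t := by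
    intro t h1 h2
    rw [hagree t (by rw [dom_coe]; exact ⟨h1, by linarith⟩)]
    exact if_pos h2
  refine ⟨b', φ', hsp, lt_of_lt_of_le (EReal.coe_lt_coe_iff.2 (by linarith)) hb'le, ?_, ?_⟩
  · intro t htt
    rw [hagr t htt.1 htt.2]; exact hl t htt
  · intro t htt
    have hNM : (N : ℝ) ≤ (M : ℝ) := Nat.cast_le.2 hMN
    rw [hagr t htt.1 (le_trans htt.2 (by linarith))]; exact hh t htt

/-! ### `Bset` as the union of the `Eset`s -/

lemma bset_eq (M N h : ℕ) : Bset M N h = ⋃ l ∈ {q : ℚ | 0 < q}, Eset M N h l := by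
  ext p
  simp only [Bset, Eset, mem_setOf_eq, mem_iUnion, exists_prop]
  constructor
  · rintro ⟨b, φ, hsp, hb, hN⟩
    have hMpos : (0 : ℝ) ≤ (M : ℝ) := Nat.cast_nonneg M
    have hcont : ContinuousOn φ (Icc p.2.1 (p.2.1 + M)) := fun t ht =>
      ((hsp.1.2.2 t (Icc_subset_dom hMpos hb ht)).continuousWithinAt).mono
        (Icc_subset_dom hMpos hb)
    obtain ⟨c, hc⟩ := (isCompact_Icc).exists_bound_of_continuousOn hcont
    obtain ⟨l, hl⟩ := exists_rat_gt (max c 0)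
    have hl0 : (0 : ℚ) < l := by
      have : (0 : ℝ) < (l : ℝ) := (le_max_right c 0).trans_lt hl
      exact_mod_cast this
    refine ⟨l, hl0, b, φ, hsp, hb, ?_, hN⟩
    intro t ht
    calc |φ t| = ‖φ t‖ := (Real.norm_eq_abs _).symm
      _ ≤ c := hc t ht
      _ ≤ l := le_of_lt ((le_max_left c 0).trans_lt hl)
  · rintro ⟨l, _, b, φ, hsp, hb, _, hN⟩
    exact ⟨b, φ, hsp, hb, hN⟩

end Statement11

open Statement11 in
/-- Proof of lemma 5.19(c): for all `M, N, h ∈ ℕ` with `M ≥ N`, each `E_ℓ` with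
`ℓ ∈ ℚ⁺` is closed in `C(ℝ²) × ℝ²`, and `B^M_{N,h} = ⋃_{ℓ∈ℚ⁺} E_ℓ`. -/
theorem statement11 (M N h : ℕ) (hMN : N ≤ M) :
    (∀ l : ℚ, 0 < l → IsClosed (Eset M N h l)) ∧
    Bset M N h = ⋃ l ∈ {q : ℚ | 0 < q}, Eset M N h l := by
  constructor
  · intro l hl
    apply IsSeqClosed.isClosed
    intro pn p hpn hp
    have hF : Tendsto (fun n => (pn n).1) atTop (𝓝 p.1) :=
      ((continuous_fst.tendsto p).comp hp : _)
    have hx : Tendsto (fun n => (pn n).2.1) atTop (𝓝 p.2.1) :=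
      (((continuous_fst.comp continuous_snd).tendsto p).comp hp : _)
    have hy : Tendsto (fun n => (pn n).2.2) atTop (𝓝 p.2.2) :=
      (((continuous_snd.comp continuous_snd).tendsto p).comp hp : _)
    set x := p.2.1
    choose b φf hsp hb hM hN using hpn
    set xn : ℕ → ℝ := fun n => (pn n).2.1 with hxn
    set yn : ℕ → ℝ := fun n => (pn n).2.2 with hyn
    have hsoln : ∀ n, SolOn ((pn n).1) (xn n) (yn n) M (φf n) := fun n =>
      PSol.solOn (hsp n).1 (Nat.cast_nonneg M) (hb n)
    set K₀ : Set (ℝ × ℝ) := Icc (x - 1) (x + M + 1) ×ˢ Icc (-(l:ℝ)) (l:ℝ) with hK₀def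
    have hK₀ : IsCompact K₀ := isCompact_Icc.prod isCompact_Icc
    have hconv : TendstoUniformlyOn (fun n z => (pn n).1 z) p.1 atTop K₀ :=
      (ContinuousMap.tendsto_iff_forall_isCompact_tendstoUniformlyOn.mp hF) K₀ hK₀
    have hxev : ∀ᶠ n in atTop, dist (xn n) x < 1 := by
      obtain ⟨n₀, hn₀⟩ := Metric.tendsto_atTop.1 hx 1 one_pos
      exact Filter.eventually_atTop.2 ⟨n₀, hn₀⟩
    have hmem : ∀ᶠ n in atTop, ∀ u ∈ Icc (0:ℝ) (M:ℝ),
        (xn n + u, φf n (xn n + u)) ∈ K₀ := by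
      filter_upwards [hxev] with n hn u hu
      have hd : |xn n - x| < 1 := by rwa [Real.dist_eq] at hn
      have habs := abs_lt.mp hd
      simp only [hK₀def, mem_prod, mem_Icc]
      refine ⟨⟨by linarith [hu.1, habs.1], by linarith [hu.2, habs.2]⟩, ?_⟩
      rw [← abs_le]
      exact hM n _ ⟨by linarith [hu.1], by linarith [hu.2]⟩
    have hbd : ∀ᶠ n in atTop, ∀ u ∈ Icc (0:ℝ) (M:ℝ), |φf n (xn n + u)| ≤ (l:ℝ) :=
      Filter.Eventually.of_forall fun n u hu =>
        hM n _ ⟨by linarith [hu.1], by linarith [hu.2]⟩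
    obtain ⟨φ, σ, hσ, hsolφ, hCbd, hptw⟩ := core (Nat.cast_nonneg M)
      (by exact_mod_cast hl.le) hK₀ hconv hx hy
      (Filter.Eventually.of_forall hsoln) hmem hbd
    have hσtop : Tendsto σ atTop atTop := hσ.tendsto_atTop
    have hl' : ∀ t ∈ Icc x (x + (M:ℝ)), |φ t| ≤ (l:ℝ) := by
      intro t ht
      have hu : t - x ∈ Icc (0:ℝ) (M:ℝ) := ⟨by linarith [ht.1], by linarith [ht.2]⟩
      have := hCbd (t - x) hu
      rwa [add_sub_cancel] at this
    have hh' : ∀ t ∈ Icc x (x + (N:ℝ)), |φ t| ≤ (h:ℝ) := by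
      intro t ht
      have hNM : (N:ℝ) ≤ (M:ℝ) := Nat.cast_le.2 hMN
      have huM : t - x ∈ Icc (0:ℝ) (M:ℝ) := ⟨by linarith [ht.1], by linarith [ht.2]⟩
      have hlim := (hptw (t - x) huM).abs
      rw [add_sub_cancel] at hlim
      apply le_of_tendsto hlim
      apply Filter.Eventually.of_forall
      intro n
      exact hN (σ n) _ ⟨by linarith [huM.1], by linarith [ht.2]⟩
    exact solOn_mem_Eset hMN hsolφ hl' hh'
  · exact bset_eq M N h
end
end
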